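/- arXiv:2605.02430 — 10 statements merged into one kernel-verified Lean document; each statement's English description precedes it below -/
import Mathlib

section
/- Let (Ω, F, P) be a probability space and (G_n)_{n∈ℕ} a filtration (an increasing sequence of sub-σ-algebras of F). Let c ∈ (0, ∞) and let (R_n)_{n∈ℕ} be nonnegative real random variables such that for every n, P-a.s. R_n ≤ c, and such that P-a.s. R_n → 0 as n → ∞. Let (r_n)_{n∈ℕ} be an arbitrary sequence of natural numbers. Then P-a.s. E[R_n | G_{r_n}] → 0 as n → ∞. -/
open MeasureTheory Filter Topology NNReal ENNReal

/-- If a nonnegative bounded sequence tends to `0`, then the tail suprema tend to `0`. -/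
lemma aux_sup_tendsto {a : ℕ → ℝ} {c : ℝ} (h0 : ∀ n, 0 ≤ a n) (hc : ∀ n, a n ≤ c)
    (ha : Tendsto a atTop (𝓝 0)) :
    Tendsto (fun m => ⨆ k, a (m + k)) atTop (𝓝 0) := by
  rw [Metric.tendsto_atTop] at ha ⊢
  intro ε hε
  obtain ⟨N, hN⟩ := ha (ε / 2) (half_pos hε)
  refine ⟨N, fun m hm => ?_⟩
  have hb : BddAbove (Set.range fun k => a (m + k)) := by
    refine ⟨c, ?_⟩
    rintro x ⟨k, rfl⟩
    exact hc _
  have h1 : (⨆ k, a (m + k)) ≤ ε / 2 := by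
    refine ciSup_le fun k => ?_
    have := hN (m + k) (hm.trans (Nat.le_add_right _ _))
    rw [Real.dist_eq, sub_zero, abs_of_nonneg (h0 _)] at this
    exact this.le
  have h2 : 0 ≤ ⨆ k, a (m + k) := (h0 (m + 0)).trans (le_ciSup hb 0)
  rw [Real.dist_eq, sub_zero, abs_of_nonneg h2]
  exact lt_of_le_of_lt h1 (half_lt_self hε)

/-- Tail version of Doob's maximal inequality for nonnegative submartingales. -/
lemma aux_doob_tail {Ω : Type*} {m0 : MeasurableSpace Ω} {μ : Measure Ω}
    [IsProbabilityMeasure μ] (𝒢 : Filtration ℕ m0) {f : ℕ → Ω → ℝ}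
    (hsub : Submartingale f 𝒢 μ) (hnonneg : 0 ≤ f) (B : ℝ)
    (hB : ∀ n, ∫ ω, f n ω ∂μ ≤ B) {ε : ℝ≥0} (hε : ε ≠ 0) :
    μ {ω | ∃ k, (ε : ℝ) ≤ f k ω} ≤ ENNReal.ofReal B / ε := by
  set S : ℕ → Set Ω := fun n =>
    {ω | (ε : ℝ) ≤ (Finset.range (n + 1)).sup' Finset.nonempty_range_add_one fun k => f k ω} with hS
  have hmono : Monotone S := by
    intro i j hij ω hω
    exact hω.trans (Finset.sup'_mono (fun k => f k ω)
      (Finset.range_subset_range.2 (Nat.succ_le_succ hij)) Finset.nonempty_range_add_one)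
  have hSn : ∀ n, μ (S n) ≤ ENNReal.ofReal B / ε := by
    intro n
    have h := maximal_ineq hsub hnonneg (ε := ε) n
    have h2 : ∫ ω in S n, f n ω ∂μ ≤ ∫ ω, f n ω ∂μ :=
      setIntegral_le_integral (hsub.integrable n) (ae_of_all _ fun ω => hnonneg n ω)
    have h3 : (ε : ℝ≥0∞) * μ (S n) ≤ ENNReal.ofReal B := by
      refine le_trans ?_ (ENNReal.ofReal_le_ofReal (h2.trans (hB n)))
      exact h
    rw [ENNReal.le_div_iff_mul_le (Or.inl (by exact_mod_cast hε)) (Or.inl ENNReal.coe_ne_top)]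
    rwa [mul_comm]
  have hU : {ω | ∃ k, (ε : ℝ) ≤ f k ω} = ⋃ n, S n := by
    ext ω
    simp only [Set.mem_setOf_eq, Set.mem_iUnion, hS]
    constructor
    · rintro ⟨k, hk⟩
      exact ⟨k, hk.trans (Finset.le_sup' (fun j => f j ω) (Finset.self_mem_range_succ k))⟩
    · rintro ⟨n, hn⟩
      obtain ⟨b, -, hb⟩ := (Finset.le_sup'_iff _).1 hn
      exact ⟨b, hb⟩
  rw [hU, hmono.directed_le.measure_iUnion]
  exact iSup_le hSn

/-- Lemma C.1 of the paper. Let `(Ω, ℱ, P)` be a probability space and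
`(𝒢 n)` a filtration. Let `c ∈ (0, ∞)` and `(R n)` be nonnegative real random variables with
`R n ≤ c` a.s. for every `n`, and `R n → 0` a.s.  Let `(r n)` be any sequence of naturals.
Then a.s. `E[R n | 𝒢 (r n)] → 0`. -/
theorem stmt0 {Ω : Type*} {m0 : MeasurableSpace Ω} {μ : Measure Ω} [IsProbabilityMeasure μ]
    (𝒢 : Filtration ℕ m0) (c : ℝ) (hc : 0 < c)
    (R : ℕ → Ω → ℝ) (hRmeas : ∀ n, Measurable (R n))
    (hRnonneg : ∀ n, ∀ᵐ ω ∂μ, 0 ≤ R n ω)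
    (hRbdd : ∀ n, ∀ᵐ ω ∂μ, R n ω ≤ c)
    (hRlim : ∀ᵐ ω ∂μ, Tendsto (fun n => R n ω) atTop (𝓝 (0 : ℝ)))
    (r : ℕ → ℕ) :
    ∀ᵐ ω ∂μ, Tendsto (fun n => (μ[R n | 𝒢 (r n)]) ω) atTop (𝓝 (0 : ℝ)) := by
  classical
  -- truncated version of `R`, pointwise in `[0, c]`
  set R' : ℕ → Ω → ℝ := fun n ω => max (min (R n ω) c) 0 with hR'
  have hR'meas : ∀ n, Measurable (R' n) := fun n =>
    ((hRmeas n).min measurable_const).max measurable_const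
  have hR'nonneg : ∀ n ω, 0 ≤ R' n ω := fun n ω => le_max_right _ _
  have hR'le : ∀ n ω, R' n ω ≤ c := fun n ω => max_le (min_le_right _ _) hc.le
  have hR'eq : ∀ n, R' n =ᵐ[μ] R n := by
    intro n
    filter_upwards [hRnonneg n, hRbdd n] with ω h1 h2
    simp [hR', min_eq_left h2, max_eq_left h1]
  have hR'lim : ∀ᵐ ω ∂μ, Tendsto (fun n => R' n ω) atTop (𝓝 0) := by
    filter_upwards [hRlim] with ω hω
    have : Tendsto (fun n => max (min (R n ω) c) 0) atTop (𝓝 (max (min 0 c) 0)) :=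
      (hω.min tendsto_const_nhds).max tendsto_const_nhds
    simpa [min_eq_left hc.le] using this
  -- tail suprema
  set T : ℕ → Ω → ℝ := fun m ω => ⨆ k, R' (m + k) ω with hT
  have hbdd : ∀ m ω, BddAbove (Set.range fun k => R' (m + k) ω) := by
    intro m ω
    refine ⟨c, ?_⟩
    rintro x ⟨k, rfl⟩
    exact hR'le _ _
  have hTmeas : ∀ m, Measurable (T m) := fun m => Measurable.iSup fun k => hR'meas (m + k)
  have hTnonneg : ∀ m ω, 0 ≤ T m ω := fun m ω =>
    (hR'nonneg (m + 0) ω).trans (le_ciSup (hbdd m ω) 0)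
  have hTle : ∀ m ω, T m ω ≤ c := fun m ω => ciSup_le fun k => hR'le _ _
  have hRleT : ∀ m n, m ≤ n → ∀ ω, R' n ω ≤ T m ω := by
    intro m n hmn ω
    have : R' (m + (n - m)) ω ≤ T m ω := le_ciSup (hbdd m ω) (n - m)
    simpa [Nat.add_sub_cancel' hmn] using this
  have hTanti : ∀ m ω, T (m + 1) ω ≤ T m ω := by
    intro m ω
    refine ciSup_le fun k => ?_
    have : R' (m + (1 + k)) ω ≤ T m ω := le_ciSup (hbdd m ω) (1 + k)
    simpa [add_assoc] using this
  have hTint : ∀ m, Integrable (T m) μ := by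
    intro m
    refine ⟨(hTmeas m).aestronglyMeasurable, ?_⟩
    refine HasFiniteIntegral.of_bounded (C := c) (ae_of_all _ fun ω => ?_)
    rw [Real.norm_eq_abs, abs_of_nonneg (hTnonneg m ω)]
    exact hTle m ω
  have hR'int : ∀ n, Integrable (R' n) μ := by
    intro n
    refine ⟨(hR'meas n).aestronglyMeasurable, ?_⟩
    refine HasFiniteIntegral.of_bounded (C := c) (ae_of_all _ fun ω => ?_)
    rw [Real.norm_eq_abs, abs_of_nonneg (hR'nonneg n ω)]
    exact hR'le n ω
  -- T m → 0 a.e., and its integrals tend to 0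
  have hTlim : ∀ᵐ ω ∂μ, Tendsto (fun m => T m ω) atTop (𝓝 0) := by
    filter_upwards [hR'lim] with ω hω
    exact aux_sup_tendsto (fun n => hR'nonneg n ω) (fun n => hR'le n ω) hω
  have hTint_lim : Tendsto (fun m => ∫ ω, T m ω ∂μ) atTop (𝓝 0) := by
    have := tendsto_integral_of_dominated_convergence (fun _ => c)
      (fun m => (hTmeas m).aestronglyMeasurable) (integrable_const c)
      (fun m => ae_of_all _ fun ω => by
        rw [Real.norm_eq_abs, abs_of_nonneg (hTnonneg m ω)]; exact hTle m ω)
      (hTlim.mono fun ω h => h)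
    simpa using this
  -- the positive part of the martingale `k ↦ E[T m | 𝒢 k]`
  set g : ℕ → ℕ → Ω → ℝ := fun m k ω => max ((μ[T m | 𝒢 k]) ω) 0 with hg
  have hgsub : ∀ m, Submartingale (g m) 𝒢 μ := by
    intro m
    exact (martingale_condExp (T m) 𝒢 μ).submartingale.pos
  have hgnonneg : ∀ m, (0 : ℕ → Ω → ℝ) ≤ g m := fun m k ω => le_max_right _ _
  have hgle : ∀ m k, (μ[T m | 𝒢 k]) ≤ᵐ[μ] fun _ => c := by
    intro m k
    have h1 : μ[T m | 𝒢 k] ≤ᵐ[μ] μ[(fun _ => c) | 𝒢 k] :=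
      condExp_mono (hTint m) (integrable_const c) (ae_of_all _ fun ω => hTle m ω)
    have h2 : μ[(fun _ => c) | 𝒢 k] = fun _ => c := condExp_const (𝒢.le k) c
    rw [h2] at h1
    exact h1
  have hgint : ∀ m k, ∫ ω, g m k ω ∂μ ≤ ∫ ω, T m ω ∂μ := by
    intro m k
    have h0 : (0 : Ω → ℝ) ≤ᵐ[μ] μ[T m | 𝒢 k] :=
      condExp_nonneg (ae_of_all _ fun ω => hTnonneg m ω)
    have heq : g m k =ᵐ[μ] μ[T m | 𝒢 k] := by
      filter_upwards [h0] with ω hω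
      exact max_eq_left (by simpa using hω)
    rw [integral_congr_ae heq, integral_condExp (𝒢.le k)]
  -- Doob tail bound applied to `g m`
  have hdoob : ∀ m (ε : ℝ≥0), ε ≠ 0 →
      μ {ω | ∃ k, (ε : ℝ) ≤ g m k ω} ≤ ENNReal.ofReal (∫ ω, T m ω ∂μ) / ε := fun m ε hε =>
    aux_doob_tail 𝒢 (hgsub m) (hgnonneg m) _ (hgint m) hε
  -- the maximal functions
  set M : ℕ → Ω → ℝ := fun m ω => ⨆ k, g m k ω with hM
  have hgbdd : ∀ᵐ ω ∂μ, ∀ m k, g m k ω ≤ c := by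
    rw [ae_all_iff]
    intro m
    rw [ae_all_iff]
    intro k
    filter_upwards [hgle m k] with ω hω
    exact max_le hω hc.le
  -- key smallness of M
  have hMsmall : ∀ (j : ℕ), ∀ᵐ ω ∂μ, ∃ m, M m ω < 1 / (j + 1) := by
    intro j
    set ε : ℝ≥0 := (2 * (j + 1) : ℝ≥0)⁻¹ with hε
    have hεne : ε ≠ 0 := by
      rw [hε]
      exact inv_ne_zero (by positivity)
    have hεcoe : (ε : ℝ) = 1 / (2 * ((j : ℝ) + 1)) := by
      rw [hε, one_div]
      push_cast
      ring_nf
    have hεlt : (ε : ℝ) < 1 / (j + 1) := by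
      rw [hεcoe, div_lt_div_iff₀ (by positivity) (by positivity)]
      nlinarith [Nat.cast_nonneg (α := ℝ) j]
    -- the bad event
    set A : Set Ω := {ω | (∀ m k, g m k ω ≤ c) ∧ ∀ m, ¬ M m ω < 1 / (j + 1)} with hA
    have hAsub : ∀ m, A ⊆ {ω | ∃ k, (ε : ℝ) ≤ g m k ω} := by
      intro m ω hω
      obtain ⟨hb, hM'⟩ := hω
      have h1 : (ε : ℝ) < M m ω := lt_of_lt_of_le hεlt (not_lt.1 (hM' m))
      obtain ⟨k, hk⟩ := exists_lt_of_lt_ciSup h1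
      exact ⟨k, hk.le⟩
    have hA0 : μ A = 0 := by
      have hle : ∀ m, μ A ≤ ENNReal.ofReal (∫ ω, T m ω ∂μ) / ε := fun m =>
        (measure_mono (hAsub m)).trans (hdoob m ε hεne)
      have h1 : Tendsto (fun m => ENNReal.ofReal (∫ ω, T m ω ∂μ)) atTop
          (𝓝 (ENNReal.ofReal 0)) := (ENNReal.continuous_ofReal.tendsto 0).comp hTint_lim
      rw [ENNReal.ofReal_zero] at h1
      have hlim : Tendsto (fun m => ENNReal.ofReal (∫ ω, T m ω ∂μ) / (ε : ℝ≥0∞))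
          atTop (𝓝 (0 / (ε : ℝ≥0∞))) :=
        ENNReal.Tendsto.div_const h1 (Or.inr (by exact_mod_cast hεne))
      rw [ENNReal.zero_div] at hlim
      have := ge_of_tendsto' hlim hle
      exact le_antisymm this zero_le
    filter_upwards [hgbdd, (measure_eq_zero_iff_ae_notMem.1 hA0 : ∀ᵐ ω ∂μ, ω ∉ A)] with ω h1 h2
    by_contra hcon
    push_neg at hcon
    exact h2 ⟨h1, fun m => not_lt.2 (hcon m)⟩
  -- pointwise comparison of the conditional expectations
  have hcomp : ∀ᵐ ω ∂μ, ∀ m n, m ≤ n → (μ[R n | 𝒢 (r n)]) ω ≤ (μ[T m | 𝒢 (r n)]) ω := by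
    rw [ae_all_iff]
    intro m
    rw [ae_all_iff]
    intro n
    rcases le_or_gt m n with hmn | hmn
    · have h1 : μ[R n | 𝒢 (r n)] =ᵐ[μ] μ[R' n | 𝒢 (r n)] := condExp_congr_ae (hR'eq n).symm
      have h2 : μ[R' n | 𝒢 (r n)] ≤ᵐ[μ] μ[T m | 𝒢 (r n)] :=
        condExp_mono (hR'int n) (hTint m) (ae_of_all _ fun ω => hRleT m n hmn ω)
      filter_upwards [h1, h2] with ω e1 e2 _
      rw [e1]; exact e2
    · exact ae_of_all _ fun ω h => absurd h (by omega)
  have hcnonneg : ∀ᵐ ω ∂μ, ∀ n, 0 ≤ (μ[R n | 𝒢 (r n)]) ω := by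
    rw [ae_all_iff]
    intro n
    have h1 : μ[R n | 𝒢 (r n)] =ᵐ[μ] μ[R' n | 𝒢 (r n)] := condExp_congr_ae (hR'eq n).symm
    have h2 : (0 : Ω → ℝ) ≤ᵐ[μ] μ[R' n | 𝒢 (r n)] :=
      condExp_nonneg (ae_of_all _ fun ω => hR'nonneg n ω)
    filter_upwards [h1, h2] with ω e1 e2
    rw [e1]; exact e2
  have hMsmall' : ∀ᵐ ω ∂μ, ∀ j : ℕ, ∃ m, M m ω < 1 / (j + 1) := ae_all_iff.2 hMsmall
  -- conclusion
  filter_upwards [hcomp, hcnonneg, hgbdd, hMsmall'] with ω h1 h2 h3 h4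
  rw [Metric.tendsto_atTop]
  intro δ hδ
  obtain ⟨j, hj⟩ := exists_nat_one_div_lt hδ
  obtain ⟨m, hm⟩ := h4 j
  refine ⟨m, fun n hn => ?_⟩
  have hbdd' : BddAbove (Set.range fun k => g m k ω) := by
    refine ⟨c, ?_⟩
    rintro x ⟨k, rfl⟩
    exact h3 m k
  have step : (μ[R n | 𝒢 (r n)]) ω ≤ M m ω := by
    calc (μ[R n | 𝒢 (r n)]) ω ≤ (μ[T m | 𝒢 (r n)]) ω := h1 m n hn
    _ ≤ g m (r n) ω := le_max_left _ _
    _ ≤ M m ω := le_ciSup hbdd' (r n)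
  rw [Real.dist_eq, sub_zero, abs_of_nonneg (h2 n)]
  exact lt_of_le_of_lt step (hm.trans hj)
end

section
/- Let ζ > 0 and let h, h' : [0,ζ] → ℝ be continuous functions. Then for all s1, s2 ∈ [0,ζ], |d_h(s1, s2) − d_{h'}(s1, s2)| ≤ 4 · sup_{s∈[0,ζ]} |h(s) − h'(s)|. -/
/-- `m_h(s1, s2) = min { h s : s ∈ [s1 ∧ s2, s1 ∨ s2] }`. -/
noncomputable def treeMin (h : ℝ → ℝ) (s1 s2 : ℝ) : ℝ := sInf (h '' Set.uIcc s1 s2)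

/-- `d_h(s1, s2) = h s1 + h s2 - 2 m_h(s1, s2)`, the pseudometric of the tree coded by `h`. -/
noncomputable def treeDist (h : ℝ → ℝ) (s1 s2 : ℝ) : ℝ := h s1 + h s2 - 2 * treeMin h s1 s2

/-- (2.40) of the paper. For continuous `h, h' : [0,ζ] → ℝ` and
`s1, s2 ∈ [0,ζ]`, `|d_h(s1,s2) - d_{h'}(s1,s2)| ≤ 4 sup_{s ∈ [0,ζ]} |h s - h' s|`. -/
theorem stmt6 (ζ : ℝ) (hζ : 0 < ζ) (h h' : ℝ → ℝ)
    (hh : ContinuousOn h (Set.Icc 0 ζ)) (hh' : ContinuousOn h' (Set.Icc 0 ζ))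
    (s1 s2 : ℝ) (hs1 : s1 ∈ Set.Icc 0 ζ) (hs2 : s2 ∈ Set.Icc 0 ζ) :
    |treeDist h s1 s2 - treeDist h' s1 s2| ≤
      4 * ⨆ u : Set.Icc (0 : ℝ) ζ, |h (u : ℝ) - h' (u : ℝ)| := by
  set M : ℝ := ⨆ u : Set.Icc (0 : ℝ) ζ, |h (u : ℝ) - h' (u : ℝ)| with hM
  -- bddAbove of the range
  have hcont : ContinuousOn (fun s => |h s - h' s|) (Set.Icc 0 ζ) := (hh.sub hh').abs
  have hbdd : BddAbove (Set.range (fun u : Set.Icc (0:ℝ) ζ => |h (u:ℝ) - h' (u:ℝ)|)) := by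
    refine ((isCompact_Icc.image_of_continuousOn hcont).bddAbove).mono ?_
    rintro x ⟨u, rfl⟩
    exact ⟨u, u.2, rfl⟩
  have hpt : ∀ s ∈ Set.Icc (0:ℝ) ζ, |h s - h' s| ≤ M := fun s hs =>
    le_ciSup hbdd (⟨s, hs⟩ : Set.Icc (0:ℝ) ζ)
  -- the uIcc is inside Icc 0 ζ
  have hK : Set.uIcc s1 s2 ⊆ Set.Icc 0 ζ := Set.uIcc_subset_Icc hs1 hs2
  have hne : (h '' Set.uIcc s1 s2).Nonempty := ⟨h s1, ⟨s1, Set.left_mem_uIcc, rfl⟩⟩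
  have hne' : (h' '' Set.uIcc s1 s2).Nonempty := ⟨h' s1, ⟨s1, Set.left_mem_uIcc, rfl⟩⟩
  have hbb : BddBelow (h '' Set.uIcc s1 s2) :=
    (isCompact_uIcc.image_of_continuousOn (hh.mono hK)).bddBelow
  have hbb' : BddBelow (h' '' Set.uIcc s1 s2) :=
    (isCompact_uIcc.image_of_continuousOn (hh'.mono hK)).bddBelow
  have key : ∀ (f g : ℝ → ℝ), BddBelow (f '' Set.uIcc s1 s2) →
      (∀ s ∈ Set.uIcc s1 s2, f s ≤ g s + M) →
      sInf (f '' Set.uIcc s1 s2) ≤ sInf (g '' Set.uIcc s1 s2) + M := by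
    intro f g hbf hfg
    have : ∀ y ∈ g '' Set.uIcc s1 s2, sInf (f '' Set.uIcc s1 s2) - M ≤ y := by
      rintro y ⟨s, hs, rfl⟩
      have h1 : sInf (f '' Set.uIcc s1 s2) ≤ f s := csInf_le hbf ⟨s, hs, rfl⟩
      linarith [hfg s hs]
    have := le_csInf (⟨g s1, ⟨s1, Set.left_mem_uIcc, rfl⟩⟩ : (g '' Set.uIcc s1 s2).Nonempty) this
    linarith
  have hm1 : treeMin h s1 s2 ≤ treeMin h' s1 s2 + M := by
    apply key h h' hbb
    intro s hs
    have := hpt s (hK hs)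
    have := abs_le.mp this
    linarith [this.2]
  have hm2 : treeMin h' s1 s2 ≤ treeMin h s1 s2 + M := by
    apply key h' h hbb'
    intro s hs
    have := hpt s (hK hs)
    have := abs_le.mp this
    linarith [this.1]
  have h1 := abs_le.mp (hpt s1 hs1)
  have h2 := abs_le.mp (hpt s2 hs2)
  rw [abs_le]
  unfold treeDist
  constructor <;> [linarith [h1.1, h2.1, hm2]; linarith [h1.2, h2.2, hm1]]
end

section
/- Let ζ > 0 and let h : [0,ζ] → ℝ be a continuous function. Then d_h is a continuous pseudometric on [0,ζ] (i.e. d_h is continuous on [0,ζ]², nonnegative, symmetric, vanishes on the diagonal and satisfies the triangle inequality), and d_h satisfies the four-point inequality. -/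
section aux
open Set

variable {H : ℝ → ℝ}

lemma tm_bdd (hH : Continuous H) (a b : ℝ) : BddBelow (H '' Set.uIcc a b) :=
  (isCompact_uIcc.image_of_continuousOn hH.continuousOn).bddBelow

lemma tm_ne (H : ℝ → ℝ) (a b : ℝ) : (H '' Set.uIcc a b).Nonempty :=
  (nonempty_uIcc).image _

lemma tm_le_left (hH : Continuous H) (a b : ℝ) : treeMin H a b ≤ H a :=
  csInf_le (tm_bdd hH a b) ⟨a, left_mem_uIcc, rfl⟩

lemma tm_comm (H : ℝ → ℝ) (a b : ℝ) : treeMin H a b = treeMin H b a := by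
  rw [treeMin, treeMin, uIcc_comm]

lemma tm_self (H : ℝ → ℝ) (a : ℝ) : treeMin H a a = H a := by
  rw [treeMin, uIcc_self, image_singleton, csInf_singleton]

lemma tm_mono (hH : Continuous H) {a b c d : ℝ} (hsub : Set.uIcc a b ⊆ Set.uIcc c d) :
    treeMin H c d ≤ treeMin H a b :=
  csInf_le_csInf (tm_bdd hH c d) (tm_ne H a b) (image_mono hsub)

lemma tm_split (hH : Continuous H) {a b c : ℝ} (hb : b ∈ Set.uIcc a c) :
    treeMin H a c = min (treeMin H a b) (treeMin H b c) := by
  have hU : Set.uIcc a c = Set.uIcc a b ∪ Set.uIcc b c :=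
    Subset.antisymm uIcc_subset_uIcc_union_uIcc
      (union_subset (uIcc_subset_uIcc left_mem_uIcc hb) (uIcc_subset_uIcc hb right_mem_uIcc))
  rw [treeMin, hU, image_union,
    csInf_union (tm_bdd hH a b) (tm_ne H a b) (tm_bdd hH b c) (tm_ne H b c)]
  rfl

/-- Four-point inequality for `treeMin`, sorted case. -/
lemma tm_key_aux (hH : Continuous H) {s1 s2 s3 s4 : ℝ} (h12 : s1 ≤ s2) (h34 : s3 ≤ s4) (h13 : s1 ≤ s3) :
    min (treeMin H s1 s3 + treeMin H s2 s4) (treeMin H s1 s4 + treeMin H s2 s3)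
      ≤ treeMin H s1 s2 + treeMin H s3 s4 := by
  have uIccIcc : ∀ x y : ℝ, x ≤ y → Set.uIcc x y = Set.Icc x y := fun x y h => uIcc_of_le h
  rcases le_total s2 s3 with h23 | h32
  · -- order s1 ≤ s2 ≤ s3 ≤ s4
    have e1 : treeMin H s1 s3 = min (treeMin H s1 s2) (treeMin H s2 s3) :=
      tm_split hH (by rw [uIccIcc _ _ (h12.trans h23)]; exact ⟨h12, h23⟩)
    have e2 : treeMin H s2 s4 = min (treeMin H s2 s3) (treeMin H s3 s4) :=
      tm_split hH (by rw [uIccIcc _ _ (h23.trans h34)]; exact ⟨h23, h34⟩)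
    refine (min_le_left _ _).trans ?_
    rw [e1, e2]
    exact add_le_add (min_le_left _ _) (min_le_right _ _)
  · rcases le_total s2 s4 with h24 | h42
    · -- order s1 ≤ s3 ≤ s2 ≤ s4
      set p := treeMin H s1 s3 with hp
      set q := treeMin H s3 s2 with hq
      set r := treeMin H s2 s4 with hr
      have e1 : treeMin H s1 s2 = min p q :=
        tm_split hH (by rw [uIccIcc _ _ (h13.trans h32)]; exact ⟨h13, h32⟩)
      have e2 : treeMin H s3 s4 = min q r :=
        tm_split hH (by rw [uIccIcc _ _ (h32.trans h24)]; exact ⟨h32, h24⟩)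
      have had1 : treeMin H s1 s4 ≤ p := tm_mono hH (by
        rw [uIccIcc _ _ h13, uIccIcc _ _ (h13.trans (h32.trans h24))]
        exact Icc_subset_Icc le_rfl (h32.trans h24))
      have had2 : treeMin H s1 s4 ≤ q := tm_mono hH (by
        rw [uIccIcc _ _ h32, uIccIcc _ _ (h13.trans (h32.trans h24))]
        exact Icc_subset_Icc h13 h24)
      have had3 : treeMin H s1 s4 ≤ r := tm_mono hH (by
        rw [uIccIcc _ _ h24, uIccIcc _ _ (h13.trans (h32.trans h24))]
        exact Icc_subset_Icc (h13.trans h32) le_rfl)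
      have hq23 : treeMin H s2 s3 = q := tm_comm H s2 s3
      rw [e1, e2, hq23]
      rcases le_total p q with h1 | h1
      · rcases le_total q r with h2 | h2
        · refine (min_le_right _ _).trans ?_
          rw [min_eq_left h1, min_eq_left h2]; linarith
        · refine (min_le_left _ _).trans ?_
          rw [min_eq_left h1, min_eq_right h2]
      · refine (min_le_right _ _).trans ?_
        rcases le_total q r with h2 | h2
        · rw [min_eq_right h1, min_eq_left h2]; linarith
        · rw [min_eq_right h1, min_eq_right h2]; linarith
    · -- order s1 ≤ s3 ≤ s4 ≤ s2
      set p := treeMin H s1 s3 with hp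
      set q := treeMin H s3 s4 with hq
      set r := treeMin H s4 s2 with hr
      have e1 : treeMin H s1 s4 = min p q :=
        tm_split hH (by rw [uIccIcc _ _ (h13.trans h34)]; exact ⟨h13, h34⟩)
      have e2 : treeMin H s3 s2 = min q r :=
        tm_split hH (by rw [uIccIcc _ _ (h34.trans h42)]; exact ⟨h34, h42⟩)
      have e3 : treeMin H s1 s2 = min p (min q r) := by
        rw [← e2]
        exact tm_split hH (by
          rw [uIccIcc _ _ (h13.trans (h34.trans h42))]
          exact ⟨h13, h34.trans h42⟩)
      have h24 : treeMin H s2 s4 = r := tm_comm H s2 s4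
      have h23 : treeMin H s2 s3 = min q r := by rw [tm_comm H s2 s3, e2]
      rw [h24, h23, e1, e3]
      refine (min_le_right _ _).trans ?_
      rcases le_total p q with h1 | h1 <;> rcases le_total q r with h2 | h2 <;>
        rcases le_total p r with h3 | h3 <;>
        simp only [min_def] <;> split_ifs <;> linarith

/-- Four-point inequality for `treeMin`, general. -/
lemma tm_key (hH : Continuous H) (s1 s2 s3 s4 : ℝ) :
    min (treeMin H s1 s3 + treeMin H s2 s4) (treeMin H s1 s4 + treeMin H s2 s3)
      ≤ treeMin H s1 s2 + treeMin H s3 s4 := by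
  have C := tm_comm H
  have c12 := C s1 s2; have c34 := C s3 s4; have c13 := C s1 s3
  have c14 := C s1 s4; have c23 := C s2 s3; have c24 := C s2 s4
  set A := treeMin H s1 s3 + treeMin H s2 s4 with hA
  set B := treeMin H s1 s4 + treeMin H s2 s3 with hB
  have solve : ∀ x y z : ℝ, min x y ≤ z → (x = A ∨ x = B) → (y = A ∨ y = B) →
      x + y = A + B → z = treeMin H s1 s2 + treeMin H s3 s4 →
      min A B ≤ treeMin H s1 s2 + treeMin H s3 s4 := by
    intro x y z hmin hx hy hsum hz
    subst hz
    rcases hx with rfl | rfl <;> rcases hy with rfl | rfl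
    · have hAB : A = B := by linarith
      rw [← hAB, min_self]; simpa using hmin
    · exact hmin
    · rw [min_comm] at hmin; exact hmin
    · have hAB : A = B := by linarith
      rw [hAB, min_self]; simpa using hmin
  rcases le_total s1 s2 with h12 | h21
  · rcases le_total s3 s4 with h34 | h43
    · rcases le_total s1 s3 with h13 | h31
      · exact tm_key_aux hH h12 h34 h13
      · refine solve _ _ _ (tm_key_aux hH h34 h12 h31) ?_ ?_ (by linarith) (by linarith) <;>
          first | (left; linarith) | (right; linarith)
    · rcases le_total s1 s4 with h14 | h41
      · refine solve _ _ _ (tm_key_aux hH h12 h43 h14) ?_ ?_ (by linarith) (by linarith) <;>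
          first | (left; linarith) | (right; linarith)
      · refine solve _ _ _ (tm_key_aux hH h43 h12 h41) ?_ ?_ (by linarith) (by linarith) <;>
          first | (left; linarith) | (right; linarith)
  · rcases le_total s3 s4 with h34 | h43
    · rcases le_total s2 s3 with h23 | h32
      · refine solve _ _ _ (tm_key_aux hH h21 h34 h23) ?_ ?_ (by linarith) (by linarith) <;>
          first | (left; linarith) | (right; linarith)
      · refine solve _ _ _ (tm_key_aux hH h34 h21 h32) ?_ ?_ (by linarith) (by linarith) <;>
          first | (left; linarith) | (right; linarith)
    · rcases le_total s2 s4 with h24 | h42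
      · refine solve _ _ _ (tm_key_aux hH h21 h43 h24) ?_ ?_ (by linarith) (by linarith) <;>
          first | (left; linarith) | (right; linarith)
      · refine solve _ _ _ (tm_key_aux hH h43 h21 h42) ?_ ?_ (by linarith) (by linarith) <;>
          first | (left; linarith) | (right; linarith)

/-- Continuity of `treeMin` for a globally continuous function. -/
lemma tm_cont (hH : Continuous H) : Continuous fun p : ℝ × ℝ => treeMin H p.1 p.2 := by
  have key : ∀ a b : ℝ,
      treeMin H a b = sInf ((fun t : ℝ => H (a + t * (b - a))) '' Set.Icc 0 1) := by
    intro a b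
    have hseg : Set.uIcc a b = (fun t : ℝ => a + t * (b - a)) '' Set.Icc 0 1 := by
      rw [← segment_eq_uIcc, segment_eq_image']
      simp [smul_eq_mul]
    rw [treeMin, hseg, ← Set.image_comp]
    rfl
  have : Continuous fun p : ℝ × ℝ =>
      sInf ((fun t : ℝ => H (p.1 + t * (p.2 - p.1))) '' Set.Icc 0 1) := by
    apply isCompact_Icc.continuous_sInf
    fun_prop
  simpa only [← key] using this

end aux

/-- Example 2.23 of the paper. For a continuous `h : [0,ζ] → ℝ`, the
function `d_h` is a continuous pseudometric on `[0,ζ]` (continuous on `[0,ζ]²`, nonnegative,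
vanishing on the diagonal, symmetric, triangle inequality), satisfying the four-point
inequality. -/
theorem stmt7 (ζ : ℝ) (hζ : 0 < ζ) (h : ℝ → ℝ) (hh : ContinuousOn h (Set.Icc 0 ζ)) :
    ContinuousOn (fun p : ℝ × ℝ => treeDist h p.1 p.2) (Set.Icc 0 ζ ×ˢ Set.Icc 0 ζ) ∧
    (∀ s1 ∈ Set.Icc (0:ℝ) ζ, ∀ s2 ∈ Set.Icc (0:ℝ) ζ, 0 ≤ treeDist h s1 s2) ∧
    (∀ s1 ∈ Set.Icc (0:ℝ) ζ, treeDist h s1 s1 = 0) ∧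
    (∀ s1 ∈ Set.Icc (0:ℝ) ζ, ∀ s2 ∈ Set.Icc (0:ℝ) ζ, treeDist h s1 s2 = treeDist h s2 s1) ∧
    (∀ s1 ∈ Set.Icc (0:ℝ) ζ, ∀ s2 ∈ Set.Icc (0:ℝ) ζ, ∀ s3 ∈ Set.Icc (0:ℝ) ζ,
      treeDist h s1 s3 ≤ treeDist h s1 s2 + treeDist h s2 s3) ∧
    (∀ s1 ∈ Set.Icc (0:ℝ) ζ, ∀ s2 ∈ Set.Icc (0:ℝ) ζ, ∀ s3 ∈ Set.Icc (0:ℝ) ζ,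
      ∀ s4 ∈ Set.Icc (0:ℝ) ζ,
      treeDist h s1 s2 + treeDist h s3 s4 ≤
        max (treeDist h s1 s3 + treeDist h s2 s4) (treeDist h s1 s4 + treeDist h s2 s3)) := by
  -- the clamped extension of h
  set c : ℝ → ℝ := fun x => max 0 (min x ζ) with hc
  have hcmem : ∀ x, c x ∈ Set.Icc 0 ζ := fun x =>
    ⟨le_max_left _ _, max_le hζ.le (min_le_right _ _)⟩
  have hceq : ∀ x ∈ Set.Icc (0:ℝ) ζ, c x = x := by
    rintro x ⟨hx0, hx1⟩
    simp [hc, min_eq_left hx1, max_eq_right hx0]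
  set H : ℝ → ℝ := fun x => h (c x) with hHdef
  have hH : Continuous H :=
    hh.comp_continuous (continuous_const.max (continuous_id.min continuous_const)) hcmem
  have hHeq : ∀ x ∈ Set.Icc (0:ℝ) ζ, H x = h x := fun x hx => by show h (c x) = h x; rw [hceq x hx]
  -- transfer treeMin / treeDist
  have hsub : ∀ s1 ∈ Set.Icc (0:ℝ) ζ, ∀ s2 ∈ Set.Icc (0:ℝ) ζ,
      Set.uIcc s1 s2 ⊆ Set.Icc 0 ζ := fun s1 h1 s2 h2 =>
    Set.OrdConnected.uIcc_subset Set.ordConnected_Icc h1 h2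
  have tmeq : ∀ s1 ∈ Set.Icc (0:ℝ) ζ, ∀ s2 ∈ Set.Icc (0:ℝ) ζ,
      treeMin h s1 s2 = treeMin H s1 s2 := by
    intro s1 h1 s2 h2
    rw [treeMin, treeMin, Set.image_congr fun x hx => (hHeq x (hsub s1 h1 s2 h2 hx)).symm]
  have tdeq : ∀ s1 ∈ Set.Icc (0:ℝ) ζ, ∀ s2 ∈ Set.Icc (0:ℝ) ζ,
      treeDist h s1 s2 = treeDist H s1 s2 := by
    intro s1 h1 s2 h2
    rw [treeDist, treeDist, tmeq s1 h1 s2 h2, hHeq s1 h1, hHeq s2 h2]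
  refine ⟨?_, ?_, ?_, ?_, ?_, ?_⟩
  · -- continuity
    have : Continuous fun p : ℝ × ℝ => treeDist H p.1 p.2 := by
      have := tm_cont (H := H) hH
      unfold treeDist
      fun_prop
    exact this.continuousOn.congr fun p hp =>
      tdeq p.1 hp.1 p.2 hp.2
  · intro s1 h1 s2 h2
    rw [tdeq s1 h1 s2 h2, treeDist]
    have l1 := tm_le_left hH s1 s2
    have l2 : treeMin H s1 s2 ≤ H s2 := by rw [tm_comm H s1 s2]; exact tm_le_left hH s2 s1
    linarith
  · intro s1 h1
    rw [tdeq s1 h1 s1 h1, treeDist, tm_self]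
    ring
  · intro s1 h1 s2 h2
    rw [tdeq s1 h1 s2 h2, tdeq s2 h2 s1 h1, treeDist, treeDist, tm_comm H s1 s2]
    ring
  · -- triangle inequality from the four-point inequality
    intro s1 h1 s2 h2 s3 h3
    rw [tdeq s1 h1 s3 h3, tdeq s1 h1 s2 h2, tdeq s2 h2 s3 h3]
    have key := tm_key hH s1 s3 s2 s2
    rw [tm_self] at key
    have l2 : treeMin H s1 s3 ≤ H s2 ∨ True := Or.inr trivial
    unfold treeDist
    rcases min_le_iff.mp key with hk | hk <;>
    · have := tm_comm H s3 s2
      have := tm_comm H s1 s2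
      linarith [tm_le_left hH s2 s2]
  · intro s1 h1 s2 h2 s3 h3 s4 h4
    rw [tdeq s1 h1 s2 h2, tdeq s3 h3 s4 h4, tdeq s1 h1 s3 h3, tdeq s2 h2 s4 h4,
      tdeq s1 h1 s4 h4, tdeq s2 h2 s3 h3]
    have key := tm_key hH s1 s2 s3 s4
    unfold treeDist
    rcases min_le_iff.mp key with hk | hk
    · exact le_max_of_le_left (by linarith)
    · exact le_max_of_le_right (by linarith)
end

section
/- Let q ∈ ℕ*. Let ((h_n, w_n))_{n∈ℕ} be a sequence of q-dimensional snakes and let (h, w) be a q-dimensional snake. Assume that h_n → h in C⁰(ℝ≥0, ℝ≥0), that w_n(0) → w(0) in C⁰(ℝ≥0, ℝ^q), and that the endpoint processes satisfy ŵ_n → ŵ in C⁰(ℝ≥0, ℝ^q). Then w_n → w in C⁰(ℝ≥0, C⁰(ℝ≥0, ℝ^q)). -/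
open Filter Topology
open scoped NNReal

/-- `m_h(s1, s2) = min { h u : u ∈ [s1 ∧ s2, s1 ∨ s2] }` for a lifetime process `h`. -/
noncomputable def snakeInf (h : C(ℝ≥0, ℝ≥0)) (s1 s2 : ℝ≥0) : ℝ≥0 :=
  sInf ((fun u => h u) '' Set.uIcc s1 s2)

/-- A `q`-dimensional snake: `(h, w)` with `h ∈ C⁰(ℝ≥0, ℝ≥0)`, `w ∈ C⁰(ℝ≥0, C⁰(ℝ≥0, ℝ^q))`,
such that (a) `w s r = w s (h s)` for `r ≥ h s`; (b) `w s1 r = w s2 r` for `r ≤ m_h(s1,s2)`. -/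
def IsSnake {E : Type*} [TopologicalSpace E] (h : C(ℝ≥0, ℝ≥0)) (w : C(ℝ≥0, C(ℝ≥0, E))) : Prop :=
  (∀ s r, h s ≤ r → w s r = w s (h s)) ∧
  ∀ s1 s2 r, r ≤ snakeInf h s1 s2 → w s1 r = w s2 r

lemma le_snakeInf {h : C(ℝ≥0, ℝ≥0)} {s1 s2 r : ℝ≥0}
    (H : ∀ t ∈ Set.uIcc s1 s2, r ≤ h t) : r ≤ snakeInf h s1 s2 :=
  le_csInf (Set.nonempty_uIcc.image _) (by rintro y ⟨t, ht, rfl⟩; exact H t ht)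

lemma le_snakeInf_add {h : C(ℝ≥0, ℝ≥0)} {s1 s2 r δ : ℝ≥0}
    (H : ∀ t ∈ Set.uIcc s1 s2, r ≤ h t + δ) : r ≤ snakeInf h s1 s2 + δ := by
  rw [← tsub_le_iff_right]
  exact le_csInf (Set.nonempty_uIcc.image _)
    (by rintro y ⟨t, ht, rfl⟩; exact tsub_le_iff_right.2 (H t ht))

lemma snake_eval {E : Type*} [TopologicalSpace E] {h : C(ℝ≥0, ℝ≥0)} {w : C(ℝ≥0, C(ℝ≥0, E))}
    (hs : IsSnake h w) (s r : ℝ≥0) (hr : r < h s) :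
    ((∀ t, t ≤ s → r < h t) ∧ w s r = w 0 r) ∨
    ∃ σ, σ ≤ s ∧ h σ = r ∧ (∀ t, σ ≤ t → t ≤ s → r ≤ h t) ∧ w s r = w σ r := by
  by_cases hT : ∃ t, t ∈ Set.Iic s ∩ h ⁻¹' Set.Iic r
  · right
    set T : Set ℝ≥0 := Set.Iic s ∩ h ⁻¹' Set.Iic r with hTdef
    have hTc : IsClosed T := isClosed_Iic.inter (isClosed_Iic.preimage h.continuous)
    have hTb : BddAbove T := ⟨s, fun t ht => ht.1⟩
    set σ := sSup T with hσdef
    have hσT : σ ∈ T := hTc.csSup_mem hT hTb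
    have hσs : σ ≤ s := hσT.1
    have hσr : h σ ≤ r := hσT.2
    -- maximality
    have hmax : ∀ t, σ ≤ t → t ≤ s → t ≠ σ → r < h t := by
      intro t hσt hts htσ
      by_contra hc
      push_neg at hc
      exact htσ (le_antisymm (le_csSup hTb ⟨hts, hc⟩) hσt)
    have hσeq : h σ = r := by
      have : r ∈ Set.Icc (h σ) (h s) := ⟨hσr, hr.le⟩
      obtain ⟨t, ht, hteq⟩ := intermediate_value_Icc hσs (h.continuous.continuousOn) this
      rcases eq_or_ne t σ with rfl | htne
      · exact hteq
      · exact absurd hteq (hmax t ht.1 ht.2 htne).ne'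
    have hmin : ∀ t, σ ≤ t → t ≤ s → r ≤ h t := by
      intro t h1 h2
      rcases eq_or_ne t σ with rfl | htne
      · exact hσeq.ge
      · exact (hmax t h1 h2 htne).le
    refine ⟨σ, hσs, hσeq, hmin, ?_⟩
    refine hs.2 s σ r (le_snakeInf ?_)
    intro t ht
    rw [Set.uIcc_of_ge hσs] at ht
    exact hmin t ht.1 ht.2
  · left
    push_neg at hT
    have hall : ∀ t, t ≤ s → r < h t := fun t hts => (by simpa using hT t : t ≤ s → r < h t) hts
    refine ⟨hall, hs.2 s 0 r (le_snakeInf ?_)⟩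
    intro t ht
    rw [Set.uIcc_comm, Set.uIcc_of_le (zero_le : (0:ℝ≥0) ≤ s)] at ht
    exact (hall t ht.2).le

lemma snake_compare {E : Type*} [MetricSpace E] {h hlim : C(ℝ≥0, ℝ≥0)}
    {w wlim : C(ℝ≥0, C(ℝ≥0, E))}
    (hs : IsSnake h w) (hsl : IsSnake hlim wlim)
    (S R : ℝ≥0) (δ : ℝ≥0) (ε : ℝ) (hε : 0 ≤ ε)
    (hR : ∀ t, t ≤ S → h t ≤ R ∧ hlim t ≤ R)
    (hδ : ∀ t, t ≤ S → h t ≤ hlim t + δ ∧ hlim t ≤ h t + δ)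
    (hmod : ∀ s r1 r2, s ≤ S → r1 ≤ R → r2 ≤ R → r1 ≤ r2 + 2 * δ → r2 ≤ r1 + 2 * δ →
      dist (wlim s r1) (wlim s r2) ≤ ε)
    (hB : ∀ t, t ≤ S → dist (w t (h t)) (wlim t (hlim t)) ≤ ε)
    (hC : ∀ r, r ≤ R → dist (w 0 r) (wlim 0 r) ≤ ε) :
    ∀ s r, s ≤ S → dist (w s r) (wlim s r) ≤ 3 * ε := by
  intro s r hsS
  have hδ2 : (δ : ℝ≥0) ≤ 2 * δ := by
    calc δ = 1 * δ := (one_mul δ).symm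
    _ ≤ 2 * δ := mul_le_mul_left one_le_two δ
  rcases le_or_gt (h s) r with h1 | h1
  · -- Case 1 : r ≥ h s
    have e1 : w s r = w s (h s) := hs.1 s r h1
    rcases le_or_gt (hlim s) r with h2 | h2
    · have e2 : wlim s r = wlim s (hlim s) := hsl.1 s r h2
      rw [e1, e2]
      calc dist (w s (h s)) (wlim s (hlim s)) ≤ ε := hB s hsS
      _ ≤ 3 * ε := by linarith
    · rw [e1]
      have hrR : r ≤ R := h2.le.trans (hR s hsS).2
      have t2 : dist (wlim s (hlim s)) (wlim s r) ≤ ε := by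
        refine hmod s (hlim s) r hsS (hR s hsS).2 hrR ?_ ?_
        · calc hlim s ≤ h s + δ := (hδ s hsS).2
          _ ≤ r + δ := add_le_add_left h1 δ
          _ ≤ r + 2 * δ := add_le_add_right hδ2 r
        · calc r ≤ hlim s := h2.le
          _ ≤ hlim s + 2 * δ := le_self_add
      calc dist (w s (h s)) (wlim s r)
          ≤ dist (w s (h s)) (wlim s (hlim s)) + dist (wlim s (hlim s)) (wlim s r) :=
            dist_triangle _ _ _
      _ ≤ ε + ε := add_le_add (hB s hsS) t2
      _ ≤ 3 * ε := by linarith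
  · have hrR : r ≤ R := h1.le.trans (hR s hsS).1
    rcases snake_eval hs s r h1 with ⟨hall, e1⟩ | ⟨σ, hσs, hσeq, hmin, e1⟩
    · -- Case 2a : no return below level r before s
      set r' := min r (snakeInf hlim 0 s) with hr'def
      have hr'r : r' ≤ r := min_le_left _ _
      have hrr' : r ≤ r' + δ := by
        have hIs : r ≤ snakeInf hlim 0 s + δ := by
          refine le_snakeInf_add ?_
          intro t ht
          rw [Set.uIcc_of_le (zero_le : (0:ℝ≥0) ≤ s)] at ht
          calc r ≤ h t := (hall t ht.2).le
          _ ≤ hlim t + δ := (hδ t (ht.2.trans hsS)).1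
        rcases le_total r (snakeInf hlim 0 s) with hm | hm
        · rw [hr'def, min_eq_left hm]; exact le_self_add
        · rw [hr'def, min_eq_right hm]; exact hIs
      have e2 : wlim 0 r' = wlim s r' := hsl.2 0 s r' (min_le_right _ _)
      have t1 : dist (w 0 r) (wlim 0 r) ≤ ε := hC r hrR
      have t2 : dist (wlim 0 r) (wlim 0 r') ≤ ε :=
        hmod 0 r r' (zero_le : (0:ℝ≥0) ≤ S) hrR (hr'r.trans hrR)
          (hrr'.trans (add_le_add_right hδ2 r')) (hr'r.trans le_self_add)
      have t3 : dist (wlim s r') (wlim s r) ≤ ε :=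
        hmod s r' r hsS (hr'r.trans hrR) hrR (hr'r.trans le_self_add)
          (hrr'.trans (add_le_add_right hδ2 r'))
      rw [e1]
      calc dist (w 0 r) (wlim s r)
          ≤ dist (w 0 r) (wlim 0 r) + dist (wlim 0 r) (wlim 0 r') + dist (wlim 0 r') (wlim s r) :=
            dist_triangle4 _ _ _ _
      _ = dist (w 0 r) (wlim 0 r) + dist (wlim 0 r) (wlim 0 r') + dist (wlim s r') (wlim s r) := by
            rw [e2]
      _ ≤ ε + ε + ε := add_le_add (add_le_add t1 t2) t3
      _ = 3 * ε := by ring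
    · -- Case 2b : σ is the last return to level r before s
      have hσS : σ ≤ S := hσs.trans hsS
      set r' := min r (snakeInf hlim σ s) with hr'def
      have hr'r : r' ≤ r := min_le_left _ _
      have hrr' : r ≤ r' + δ := by
        have hIs : r ≤ snakeInf hlim σ s + δ := by
          refine le_snakeInf_add ?_
          intro t ht
          rw [Set.uIcc_of_le hσs] at ht
          calc r ≤ h t := hmin t ht.1 ht.2
          _ ≤ hlim t + δ := (hδ t (ht.2.trans hsS)).1
        rcases le_total r (snakeInf hlim σ s) with hm | hm
        · rw [hr'def, min_eq_left hm]; exact le_self_add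
        · rw [hr'def, min_eq_right hm]; exact hIs
      have e2 : wlim σ r' = wlim s r' := hsl.2 σ s r' (min_le_right _ _)
      have e3 : w σ r = w σ (h σ) := by rw [hσeq]
      have t1 : dist (w σ r) (wlim σ (hlim σ)) ≤ ε := by rw [e3]; exact hB σ hσS
      have t2 : dist (wlim σ (hlim σ)) (wlim σ r') ≤ ε := by
        refine hmod σ (hlim σ) r' hσS (hR σ hσS).2 (hr'r.trans hrR) ?_ ?_
        · calc hlim σ ≤ h σ + δ := (hδ σ hσS).2
          _ = r + δ := by rw [hσeq]
          _ ≤ (r' + δ) + δ := add_le_add_left hrr' δ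
          _ = r' + 2 * δ := by ring
        · calc r' ≤ r := hr'r
          _ = h σ := hσeq.symm
          _ ≤ hlim σ + δ := (hδ σ hσS).1
          _ ≤ hlim σ + 2 * δ := add_le_add_right hδ2 _
      have t3 : dist (wlim s r') (wlim s r) ≤ ε :=
        hmod s r' r hsS (hr'r.trans hrR) hrR (hr'r.trans le_self_add)
          (hrr'.trans (add_le_add_right hδ2 r'))
      rw [e1]
      calc dist (w σ r) (wlim s r)
          ≤ dist (w σ r) (wlim σ (hlim σ)) + dist (wlim σ (hlim σ)) (wlim σ r')
              + dist (wlim σ r') (wlim s r) := dist_triangle4 _ _ _ _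
      _ = dist (w σ r) (wlim σ (hlim σ)) + dist (wlim σ (hlim σ)) (wlim σ r')
              + dist (wlim s r') (wlim s r) := by rw [e2]
      _ ≤ ε + ε + ε := add_le_add (add_le_add t1 t2) t3
      _ = 3 * ε := by ring

lemma nnclose_of_dist {a b δ : ℝ≥0} (hd : dist a b ≤ (δ : ℝ)) : a ≤ b + δ ∧ b ≤ a + δ := by
  rw [NNReal.dist_eq, abs_le] at hd
  constructor <;> (rw [← NNReal.coe_le_coe]; push_cast; linarith [hd.1, hd.2])

lemma dist_of_nnclose {a b δ : ℝ≥0} (h1 : a ≤ b + δ) (h2 : b ≤ a + δ) : dist a b ≤ (δ : ℝ) := by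
  rw [NNReal.dist_eq, abs_le]
  have h1' := NNReal.coe_le_coe.2 h1
  have h2' := NNReal.coe_le_coe.2 h2
  push_cast at h1' h2'
  constructor <;> linarith

/-- Proposition 2.34 of the paper, extending Marckert–Mokkadem.
If `q`-dimensional snakes `(h n, w n)` are such that `h n → hl` in `C⁰(ℝ≥0, ℝ≥0)`,
`w n 0 → wl 0` in `C⁰(ℝ≥0, ℝ^q)` and the endpoint processes `s ↦ w n s (h n s)` converge to
`s ↦ wl s (hl s)` uniformly on every compact subset of `ℝ≥0`, where `(hl, wl)` is a snake,
then `w n → wl` in `C⁰(ℝ≥0, C⁰(ℝ≥0, ℝ^q))`. -/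
theorem stmt10 (q : ℕ) (hq : 0 < q)
    (h : ℕ → C(ℝ≥0, ℝ≥0)) (w : ℕ → C(ℝ≥0, C(ℝ≥0, EuclideanSpace ℝ (Fin q))))
    (hl : C(ℝ≥0, ℝ≥0)) (wl : C(ℝ≥0, C(ℝ≥0, EuclideanSpace ℝ (Fin q))))
    (hsn : ∀ n, IsSnake (h n) (w n)) (hsnl : IsSnake hl wl)
    (hcv : Tendsto h atTop (𝓝 hl))
    (w0cv : Tendsto (fun n => w n 0) atTop (𝓝 (wl 0)))
    (hatcv : ∀ K : Set ℝ≥0, IsCompact K →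
      TendstoUniformlyOn (fun n u => w n u (h n u)) (fun u => wl u (hl u)) atTop K) :
    Tendsto w atTop (𝓝 wl) := by
  have key : Tendsto (fun n => (w n).uncurry) atTop (𝓝 wl.uncurry) := by
    rw [ContinuousMap.tendsto_iff_forall_isCompact_tendstoUniformlyOn]
    intro K hK
    rw [Metric.tendstoUniformlyOn_iff]
    intro ε hεpos
    obtain ⟨S, hS⟩ := (hK.image continuous_fst).bddAbove
    obtain ⟨R0, hR0⟩ := (isCompact_Icc.image hl.continuous :
      IsCompact ((fun t => hl t) '' Set.Icc 0 S)).bddAbove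
    set R : ℝ≥0 := R0 + 1 with hRdef
    have hlR0 : ∀ t, t ≤ S → hl t ≤ R0 := fun t ht => hR0 ⟨t, ⟨zero_le, ht⟩, rfl⟩
    have hUC : UniformContinuousOn wl.uncurry ((Set.Icc 0 S) ×ˢ (Set.Icc 0 R)) :=
      (isCompact_Icc.prod isCompact_Icc).uniformContinuousOn_of_continuous
        wl.uncurry.continuous.continuousOn
    set ε' : ℝ := ε / 4 with hε'def
    have hε'pos : 0 < ε' := by positivity
    obtain ⟨δ₀, hδ₀, hmod0⟩ := Metric.uniformContinuousOn_iff_le.mp hUC ε' hε'pos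
    set δ : ℝ≥0 := Real.toNNReal (min 1 (δ₀ / 2)) with hδdef
    have hδcoe : (δ : ℝ) = min 1 (δ₀ / 2) :=
      Real.coe_toNNReal _ (le_min zero_le_one (by positivity))
    have hδ1 : δ ≤ 1 := by
      rw [← NNReal.coe_le_coe, hδcoe]; simpa using min_le_left 1 (δ₀ / 2)
    have hδpos : (0 : ℝ) < δ := by rw [hδcoe]; positivity
    have E1 : ∀ᶠ n in atTop, ∀ t ∈ Set.Icc 0 S, dist (hl t) (h n t) < (δ : ℝ) :=
      (Metric.tendstoUniformlyOn_iff.mp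
        (ContinuousMap.tendsto_iff_forall_isCompact_tendstoUniformlyOn.mp hcv _ isCompact_Icc))
        δ hδpos
    have E2 : ∀ᶠ n in atTop, ∀ t ∈ Set.Icc 0 S, dist (wl t (hl t)) (w n t (h n t)) < ε' :=
      (Metric.tendstoUniformlyOn_iff.mp (hatcv _ isCompact_Icc)) ε' hε'pos
    have E3 : ∀ᶠ n in atTop, ∀ r ∈ Set.Icc 0 R, dist (wl 0 r) (w n 0 r) < ε' :=
      (Metric.tendstoUniformlyOn_iff.mp
        (ContinuousMap.tendsto_iff_forall_isCompact_tendstoUniformlyOn.mp w0cv _ isCompact_Icc))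
        ε' hε'pos
    filter_upwards [E1, E2, E3] with n h1 h2 h3
    have hδn : ∀ t, t ≤ S → h n t ≤ hl t + δ ∧ hl t ≤ h n t + δ := by
      intro t ht
      have := nnclose_of_dist (δ := δ) (le_of_lt (h1 t ⟨zero_le, ht⟩))
      exact ⟨this.2, this.1⟩
    have hRn : ∀ t, t ≤ S → h n t ≤ R ∧ hl t ≤ R := by
      intro t ht
      refine ⟨?_, (hlR0 t ht).trans le_self_add⟩
      calc h n t ≤ hl t + δ := (hδn t ht).1
      _ ≤ R0 + 1 := add_le_add (hlR0 t ht) hδ1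
    have hmod : ∀ s r1 r2 : ℝ≥0, s ≤ S → r1 ≤ R → r2 ≤ R → r1 ≤ r2 + 2 * δ →
        r2 ≤ r1 + 2 * δ → dist (wl s r1) (wl s r2) ≤ ε' := by
      intro s r1 r2 hs hr1 hr2 hc1 hc2
      have hd : dist ((s, r1) : ℝ≥0 × ℝ≥0) (s, r2) ≤ δ₀ := by
        rw [Prod.dist_eq]
        have hr : dist r1 r2 ≤ ((2 * δ : ℝ≥0) : ℝ) := dist_of_nnclose hc1 hc2
        have h2δ : ((2 * δ : ℝ≥0) : ℝ) ≤ δ₀ := by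
          push_cast
          rw [hδcoe]
          nlinarith [min_le_right 1 (δ₀ / 2)]
        rw [dist_self]
        exact max_le hδ₀.le (hr.trans h2δ)
      have := hmod0 (s, r1) ⟨⟨zero_le, hs⟩, ⟨zero_le, hr1⟩⟩
        (s, r2) ⟨⟨zero_le, hs⟩, ⟨zero_le, hr2⟩⟩ hd
      simpa using this
    have hBn : ∀ t, t ≤ S → dist (w n t (h n t)) (wl t (hl t)) ≤ ε' := by
      intro t ht
      rw [dist_comm]
      exact (h2 t ⟨zero_le, ht⟩).le
    have hCn : ∀ r, r ≤ R → dist (w n 0 r) (wl 0 r) ≤ ε' := by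
      intro r hr
      rw [dist_comm]
      exact (h3 r ⟨zero_le, hr⟩).le
    have main := snake_compare (hsn n) hsnl S R δ ε' hε'pos.le hRn hδn hmod hBn hCn
    intro p hp
    have hp1 : p.1 ≤ S := hS ⟨p, hp, rfl⟩
    have hd := main p.1 p.2 hp1
    calc dist (wl.uncurry p) ((w n).uncurry p) = dist (w n p.1 p.2) (wl p.1 p.2) := by
          simp [Function.uncurry, dist_comm]
    _ ≤ 3 * ε' := hd
    _ < ε := by rw [hε'def]; linarith
  have hcu : ∀ (f : C(ℝ≥0, C(ℝ≥0, EuclideanSpace ℝ (Fin q)))), f.uncurry.curry = f := by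
    intro f
    ext s r
    simp
  have := (ContinuousMap.continuous_curry.tendsto wl.uncurry).comp key
  simpa [Function.comp_def, hcu] using this
end

section
/- For every q ∈ ℕ*, the set Σ_q(ℝ≥0) of q-dimensional snakes is a closed subset of the product space C⁰(ℝ≥0, ℝ≥0) × C⁰(ℝ≥0, C⁰(ℝ≥0, ℝ^q)). -/
open scoped NNReal

lemma sInf_range_le_add {K : Type*} [TopologicalSpace K] [CompactSpace K] [Nonempty K]
    (g1 g2 : C(K, ℝ≥0)) :
    sInf (Set.range g1) ≤ sInf (Set.range g2) + nndist g1 g2 := by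
  obtain ⟨x0, -, hx0⟩ := isCompact_univ.exists_isMinOn Set.univ_nonempty
    g2.continuous.continuousOn
  have h1 : sInf (Set.range g1) ≤ g1 x0 := csInf_le (OrderBot.bddBelow _) ⟨x0, rfl⟩
  have h2 : g1 x0 ≤ g2 x0 + nndist (g1 x0) (g2 x0) := by
    rw [NNReal.nndist_eq]
    exact tsub_le_iff_left.mp (le_max_left _ _)
  have h3 : g2 x0 ≤ sInf (Set.range g2) :=
    le_csInf (Set.range_nonempty _) (by rintro b ⟨y, rfl⟩; exact hx0 (Set.mem_univ y))
  have h4 : nndist (g1 x0) (g2 x0) ≤ nndist g1 g2 := by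
    have := ContinuousMap.dist_apply_le_dist (f := g1) (g := g2) x0
    rwa [dist_nndist, dist_nndist, NNReal.coe_le_coe] at this
  exact h1.trans (h2.trans (add_le_add h3 h4))

lemma lipschitz_infOnCompact {K : Type*} [TopologicalSpace K] [CompactSpace K] [Nonempty K] :
    LipschitzWith 1 (fun g : C(K, ℝ≥0) => sInf (Set.range g)) := by
  intro g1 g2
  rw [edist_nndist, edist_nndist, ENNReal.coe_one, one_mul, ENNReal.coe_le_coe,
    NNReal.nndist_eq]
  refine max_le ?_ ?_
  · exact tsub_le_iff_right.mpr ((sInf_range_le_add g1 g2).trans (by rw [add_comm]))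
  · rw [nndist_comm]
    exact tsub_le_iff_right.mpr ((sInf_range_le_add g2 g1).trans (by rw [add_comm]))

lemma continuous_snakeInf (s1 s2 : ℝ≥0) :
    Continuous fun h : C(ℝ≥0, ℝ≥0) => snakeInf h s1 s2 := by
  haveI : CompactSpace (Set.uIcc s1 s2) := isCompact_iff_compactSpace.mp (show IsCompact (Set.Icc (s1 ⊓ s2) (s1 ⊔ s2)) from isCompact_Icc)
  haveI : Nonempty (Set.uIcc s1 s2) := Set.nonempty_uIcc.to_subtype
  have key : ∀ h : C(ℝ≥0, ℝ≥0),
      snakeInf h s1 s2 = sInf (Set.range (h.restrict (Set.uIcc s1 s2))) := by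
    intro h
    rw [snakeInf, Set.image_eq_range]
    rfl
  simp_rw [key]
  exact lipschitz_infOnCompact.continuous.comp (ContinuousMap.continuous_restrict _)

/-- Remark 2.31 (a) of the paper. The set `Σ_q(ℝ≥0)` of `q`-dimensional
snakes is closed in `C⁰(ℝ≥0, ℝ≥0) × C⁰(ℝ≥0, C⁰(ℝ≥0, ℝ^q))`. -/
theorem stmt11 (q : ℕ) (hq : 0 < q) :
    IsClosed {p : C(ℝ≥0, ℝ≥0) × C(ℝ≥0, C(ℝ≥0, EuclideanSpace ℝ (Fin q))) |
      IsSnake p.1 p.2} := by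
  set E := EuclideanSpace ℝ (Fin q)
  set P := C(ℝ≥0, ℝ≥0) × C(ℝ≥0, C(ℝ≥0, E))
  have hset : {p : P | IsSnake p.1 p.2} =
      (⋂ s, ⋂ r, {p : P | p.2 s (max r (p.1 s)) = p.2 s (p.1 s)}) ∩
      (⋂ s1, ⋂ s2, ⋂ r, {p : P | p.2 s1 (min r (snakeInf p.1 s1 s2))
        = p.2 s2 (min r (snakeInf p.1 s1 s2))}) := by
    ext p
    simp only [Set.mem_setOf_eq, Set.mem_inter_iff, Set.mem_iInter, IsSnake]
    constructor
    · rintro ⟨ha, hb⟩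
      exact ⟨fun s r => ha s _ (le_max_right _ _),
        fun s1 s2 r => hb s1 s2 _ (min_le_right _ _)⟩
    · rintro ⟨ha, hb⟩
      constructor
      · intro s r hr
        have := ha s r
        rwa [max_eq_left hr] at this
      · intro s1 s2 r hr
        have := hb s1 s2 r
        rwa [min_eq_left hr] at this
  rw [hset]
  have hev : ∀ (s : ℝ≥0) (f : P → ℝ≥0), Continuous f →
      Continuous fun p : P => p.2 s (f p) := by
    intro s f hf
    exact continuous_eval.comp
      (((continuous_eval_const s).comp continuous_snd).prodMk hf)
  apply IsClosed.inter
  · refine isClosed_iInter fun s => isClosed_iInter fun r => isClosed_eq ?_ ?_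
    · exact hev s _ (continuous_const.max ((continuous_eval_const s).comp continuous_fst))
    · exact hev s _ ((continuous_eval_const s).comp continuous_fst)
  · refine isClosed_iInter fun s1 => isClosed_iInter fun s2 => isClosed_iInter fun r =>
      isClosed_eq ?_ ?_
    · exact hev s1 _ (continuous_const.min ((continuous_snakeInf s1 s2).comp continuous_fst))
    · exact hev s2 _ (continuous_const.min ((continuous_snakeInf s1 s2).comp continuous_fst))
end

section
/- Let q ∈ ℕ*. The map ((C⁰_q)² × ℝ≥0 × ℝ≥0) → C⁰_q sending (w0, w1, m, r) to the function s ↦ (w0 ⊕_m w1)(s ∧ r) is continuous, where for w0, w1 ∈ C⁰_q and m ≥ 0 the concatenation w0 ⊕_m w1 ∈ C⁰_q is defined by (w0 ⊕_m w1)(s) = w0(s) for 0 ≤ s ≤ m and (w0 ⊕_m w1)(s) = w0(m) + w1(s − m) − w1(0) for s ≥ m. -/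
open scoped NNReal

/-- Concatenation of paths: `(w0 ⊕_m w1)(s) = w0 s` for `s ≤ m` and
`(w0 ⊕_m w1)(s) = w0 m + w1 (s - m) - w1 0` for `s ≥ m`. -/
noncomputable def oplus {E : Type*} [AddCommGroup E] (w0 w1 : ℝ≥0 → E) (m : ℝ≥0) :
    ℝ≥0 → E :=
  fun t => if t ≤ m then w0 t else w0 m + w1 (t - m) - w1 0

/-- (2.48) of the paper. The map
`(w0, w1, m, r) ↦ (s ↦ (w0 ⊕_m w1)(s ∧ r))` is continuous from
`C⁰(ℝ≥0, ℝ^q)² × ℝ≥0 × ℝ≥0` to `C⁰(ℝ≥0, ℝ^q)`. The map is presented as a function `F` into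
`C(ℝ≥0, ℝ^q)` uniquely determined by the pointwise description. -/
theorem stmt13 (q : ℕ) (hq : 0 < q) :
    ∃ F : C(ℝ≥0, EuclideanSpace ℝ (Fin q)) × C(ℝ≥0, EuclideanSpace ℝ (Fin q)) × ℝ≥0 × ℝ≥0 →
        C(ℝ≥0, EuclideanSpace ℝ (Fin q)),
      Continuous F ∧
      ∀ w0 w1 m r t,
        F (w0, w1, m, r) t = oplus (fun u => w0 u) (fun u => w1 u) m (min t r) := by
  set E := EuclideanSpace ℝ (Fin q)
  set P := C(ℝ≥0, E) × C(ℝ≥0, E) × ℝ≥0 × ℝ≥0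
  -- the uncurried map
  have hcont : Continuous fun x : P × ℝ≥0 =>
      x.1.1 (min (min x.2 x.1.2.2.2) x.1.2.2.1)
        + x.1.2.1 (min x.2 x.1.2.2.2 - x.1.2.2.1) - x.1.2.1 0 := by
    have hm : Continuous fun x : P × ℝ≥0 => x.1.2.2.1 :=
      (continuous_fst.comp (continuous_snd.comp (continuous_snd.comp continuous_fst)))
    have hs : Continuous fun x : P × ℝ≥0 => min x.2 x.1.2.2.2 :=
      continuous_snd.min
        (continuous_snd.comp (continuous_snd.comp (continuous_snd.comp continuous_fst)))
    have h0 : Continuous fun x : P × ℝ≥0 => x.1.1 (min (min x.2 x.1.2.2.2) x.1.2.2.1) :=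
      continuous_eval.comp ((continuous_fst.comp continuous_fst).prodMk (hs.min hm))
    have h1 : Continuous fun x : P × ℝ≥0 => x.1.2.1 (min x.2 x.1.2.2.2 - x.1.2.2.1) :=
      continuous_eval.comp
        ((continuous_fst.comp (continuous_snd.comp continuous_fst)).prodMk (hs.sub hm))
    have h2 : Continuous fun x : P × ℝ≥0 => x.1.2.1 (0 : ℝ≥0) :=
      (continuous_eval_const 0).comp (continuous_fst.comp (continuous_snd.comp continuous_fst))
    exact (h0.add h1).sub h2
  let G : C(P × ℝ≥0, E) := ⟨_, hcont⟩
  refine ⟨fun p => G.curry p, G.curry.continuous, fun w0 w1 m r t => ?_⟩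
  show w0 (min (min t r) m) + w1 (min t r - m) - w1 0 = _
  unfold oplus
  by_cases h : min t r ≤ m
  · rw [if_pos h, min_eq_left h, tsub_eq_zero_of_le h]
    abel
  · rw [if_neg h, min_eq_right (le_of_not_ge h)]
end

section
/- Let q, p ∈ ℕ*. For h ∈ C⁰₊, paths w_0, ..., w_p ∈ C⁰_q and real numbers 0 = s_0 ≤ s_1 < s_2 < ⋯ < s_p, define F_p(h; (w_j)_{0≤j≤p}; (s_j)_{1≤j≤p}) = (w'_j)_{0≤j≤p} ∈ (C⁰_q)^{p+1} recursively by w'_0 = w_0(· ∧ h(0)) and w'_{j+1} = (w'_j ⊕_{m_h(s_j, s_{j+1})} w_{j+1})(· ∧ h(s_{j+1})) for 0 ≤ j < p, where m_h(a, b) = min{h(s) : s ∈ [a, b]} and ⊕_m is the concatenation operation. Then F_p is continuous from C⁰₊ × (C⁰_q)^{p+1} × {(s_j)_{1≤j≤p} ∈ ℝ≥0^p : s_1 < s_2 < ⋯ < s_p} to (C⁰_q)^{p+1} (all spaces carrying the product topologies). -/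
open scoped NNReal

/-- `m_h(a, b) = min { h u : u ∈ [a ∧ b, a ∨ b] }`. -/
noncomputable def uMin (h : ℝ≥0 → ℝ≥0) (a b : ℝ≥0) : ℝ≥0 := sInf (h '' Set.uIcc a b)

/-- The recursive definition (2.49) of the paper: `w'_0 = w_0 (· ∧ h (s 0))` and
`w'_{j+1} = (w'_j ⊕_{m_h(s_j, s_{j+1})} w_{j+1}) (· ∧ h (s_{j+1}))`
(to be applied with `s 0 = 0`). -/
noncomputable def snakeMarg {E : Type*} [AddCommGroup E] (h : ℝ≥0 → ℝ≥0) (w : ℕ → ℝ≥0 → E)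
    (s : ℕ → ℝ≥0) : ℕ → ℝ≥0 → E
  | 0 => fun t => w 0 (min t (h (s 0)))
  | j + 1 => fun t =>
      oplus (snakeMarg h w s j) (w (j + 1)) (uMin h (s j) (s (j + 1))) (min t (h (s (j + 1))))

/-- Extension of `w : Fin (p+1) → C(ℝ≥0, E)` to `ℕ`-indices (indices `> p` are irrelevant). -/
def wExt {E : Type*} [TopologicalSpace E] (p : ℕ) (w : Fin (p + 1) → C(ℝ≥0, E)) :
    ℕ → ℝ≥0 → E :=
  fun j t => w ⟨min j p, Nat.lt_succ_of_le (Nat.min_le_right j p)⟩ t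

/-- Extension of `(s_j)_{1 ≤ j ≤ p}` to `ℕ`-indices with the convention `s_0 = 0`
(indices `> p` are irrelevant). -/
def sExt (p : ℕ) (s : Fin p → ℝ≥0) : ℕ → ℝ≥0 :=
  fun j => if hj : 0 < j ∧ j ≤ p then s ⟨j - 1, by omega⟩ else 0

section Aux

open Set

/-- `oplus` rewritten without case split (using truncated subtraction on `ℝ≥0`). -/
lemma oplus_eq {E : Type*} [AddCommGroup E] (w0 w1 : ℝ≥0 → E) (m t : ℝ≥0) :
    oplus w0 w1 m t = w0 (min t m) + w1 (t - m) - w1 0 := by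
  unfold oplus
  split_ifs with h
  · rw [min_eq_left h, tsub_eq_zero_of_le h]
    abel
  · rw [min_eq_right (le_of_not_ge h)]

/-- Affine parametrization of `uIcc a b` by `Icc 0 1`. -/
noncomputable def linNN (a b t : ℝ≥0) : ℝ≥0 := min a b + t * (max a b - min a b)

lemma Icc_image_param (a b : ℝ≥0 ) (hab : a ≤ b) :
    (fun t => a + t * (b - a)) '' Set.Icc 0 1 = Set.Icc a b := by
  ext y
  simp only [Set.mem_image, Set.mem_Icc]
  constructor
  · rintro ⟨t, ⟨-, ht1⟩, rfl⟩
    refine ⟨le_self_add, ?_⟩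
    calc a + t * (b - a) ≤ a + 1 * (b - a) := by gcongr
      _ = b := by rw [one_mul, add_tsub_cancel_of_le hab]
  · rintro ⟨h1, h2⟩
    by_cases hba : b - a = 0
    · refine ⟨0, ⟨le_rfl, zero_le_one⟩, ?_⟩
      have : y = a := le_antisymm (h2.trans (tsub_eq_zero_iff_le.1 hba)) h1
      simp [this]
    · exact ⟨(y - a) / (b - a),
        ⟨zero_le, div_le_one_of_le₀ (tsub_le_tsub_right h2 _) zero_le⟩,
        by rw [div_mul_cancel₀ _ hba, add_tsub_cancel_of_le h1]⟩

lemma linNN_image (a b : ℝ≥0 ) : (fun t => linNN a b t) '' Set.Icc 0 1 = Set.uIcc a b := by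
  unfold linNN
  rcases le_total a b with hab | hab
  · rw [min_eq_left hab, max_eq_right hab, Set.uIcc_of_le hab, Icc_image_param a b hab]
  · rw [min_eq_right hab, max_eq_left hab, Set.uIcc_of_ge hab, Icc_image_param b a hab]

lemma uMin_eq_param (h : ℝ≥0 → ℝ≥0) (a b : ℝ≥0) :
    uMin h a b = sInf ((fun t => h (linNN a b t)) '' Set.Icc 0 1) := by
  rw [uMin, ← linNN_image a b, Set.image_image]

/-- Joint continuity of `uMin` in `(h, a, b)`. -/
lemma uMin_cont {X : Type*} [TopologicalSpace X] {h : X → C(ℝ≥0, ℝ≥0)} {a b : X → ℝ≥0}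
    (hh : Continuous h) (ha : Continuous a) (hb : Continuous b) :
    Continuous fun x => uMin (fun u => h x u) (a x) (b x) := by
  simp only [uMin_eq_param]
  exact IsCompact.continuous_sInf (isCompact_Icc (a := (0:ℝ≥0)) (b := 1))
    (hh.fst'.eval <| by
      have : Continuous fun p : X × ℝ≥0 => linNN (a p.1) (b p.1) p.2 := by
        unfold linNN
        exact ((ha.fst'.min hb.fst').add
          (continuous_snd.mul ((ha.fst'.max hb.fst').sub (ha.fst'.min hb.fst'))))
      exact this)

/-- Joint continuity of the recursion `snakeMarg` in all its arguments. -/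
lemma snakeMarg_cont {X E : Type*} [TopologicalSpace X] [TopologicalSpace E] [AddCommGroup E]
    [IsTopologicalAddGroup E]
    {h : X → C(ℝ≥0, ℝ≥0)} {w : ℕ → X → C(ℝ≥0, E)} {s : ℕ → X → ℝ≥0}
    (hh : Continuous h) (hw : ∀ n, Continuous (w n)) (hs : ∀ n, Continuous (s n)) (j : ℕ) :
    Continuous fun p : X × ℝ≥0 =>
      snakeMarg (fun u => h p.1 u) (fun n u => w n p.1 u) (fun n => s n p.1) j p.2 := by
  induction j with
  | zero =>
      show Continuous fun p : X × ℝ≥0 => w 0 p.1 (min p.2 (h p.1 (s 0 p.1)))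
      exact (hw 0).fst'.eval (continuous_snd.min (hh.fst'.eval ((hs 0).fst')))
  | succ j ih =>
      show Continuous fun p : X × ℝ≥0 =>
        oplus (snakeMarg (fun u => h p.1 u) (fun n u => w n p.1 u) (fun n => s n p.1) j)
          (fun u => w (j + 1) p.1 u)
          (uMin (fun u => h p.1 u) (s j p.1) (s (j + 1) p.1))
          (min p.2 (h p.1 (s (j + 1) p.1)))
      simp only [oplus_eq]
      have hm : Continuous fun x : X =>
          uMin (fun u => h x u) (s j x) (s (j + 1) x) :=
        uMin_cont hh (hs j) (hs (j + 1))
      have ht : Continuous fun p : X × ℝ≥0 => min p.2 (h p.1 (s (j + 1) p.1)) :=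
        continuous_snd.min (hh.fst'.eval ((hs (j + 1)).fst'))
      refine Continuous.sub (Continuous.add ?_ ?_) ?_
      · exact ih.comp (continuous_fst.prodMk (ht.min hm.fst'))
      · exact (hw (j + 1)).fst'.eval (ht.sub hm.fst')
      · exact (hw (j + 1)).fst'.eval continuous_const

end Aux

/-- (2.49)–(2.50) of the paper. The map
`F_p : (h; w_0, …, w_p; s_1 < ⋯ < s_p) ↦ (w'_0, …, w'_p)` given by the recursion `snakeMarg`
(with `s_0 = 0`) is continuous from
`C⁰(ℝ≥0,ℝ≥0) × (C⁰(ℝ≥0,ℝ^q))^{p+1} × {s ∈ ℝ≥0^p : s_1 < ⋯ < s_p}` to `(C⁰(ℝ≥0,ℝ^q))^{p+1}`. -/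
theorem stmt14 (q p : ℕ) (hq : 0 < q) (hp : 0 < p) :
    ∃ F : C(ℝ≥0, ℝ≥0) × (Fin (p + 1) → C(ℝ≥0, EuclideanSpace ℝ (Fin q))) × (Fin p → ℝ≥0) →
        (Fin (p + 1) → C(ℝ≥0, EuclideanSpace ℝ (Fin q))),
      (∀ h w s (j : Fin (p + 1)) (t : ℝ≥0),
        F (h, w, s) j t = snakeMarg (fun u => h u) (wExt p w) (sExt p s) (j : ℕ) t) ∧
      ContinuousOn F {x | StrictMono x.2.2} := by
  set X := C(ℝ≥0, ℝ≥0) × (Fin (p + 1) → C(ℝ≥0, EuclideanSpace ℝ (Fin q))) × (Fin p → ℝ≥0)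
  have hh : Continuous fun x : X => x.1 := continuous_fst
  have hw : ∀ n : ℕ, Continuous fun x : X =>
      x.2.1 ⟨min n p, Nat.lt_succ_of_le (Nat.min_le_right n p)⟩ :=
    fun n => (continuous_apply _).comp (continuous_fst.comp continuous_snd)
  have hs : ∀ n : ℕ, Continuous fun x : X => sExt p x.2.2 n := by
    intro n
    unfold sExt
    split_ifs with hn
    · exact (continuous_apply _).comp (continuous_snd.comp continuous_snd)
    · exact continuous_const
  have key : ∀ j : ℕ, Continuous fun pr : X × ℝ≥0 =>
      snakeMarg (fun u => pr.1.1 u) (wExt p pr.1.2.1) (sExt p pr.1.2.2) j pr.2 := by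
    intro j
    exact snakeMarg_cont (h := fun x : X => x.1)
      (w := fun n x => x.2.1 ⟨min n p, Nat.lt_succ_of_le (Nat.min_le_right n p)⟩)
      (s := fun n x => sExt p x.2.2 n) hh hw hs j
  refine ⟨fun x j => ⟨fun t => snakeMarg (fun u => x.1 u) (wExt p x.2.1) (sExt p x.2.2) j t,
    (key j).comp (Continuous.prodMk_right x)⟩, fun h w s j t => rfl, ?_⟩
  refine Continuous.continuousOn ?_
  refine continuous_pi fun j => ContinuousMap.continuous_of_continuous_uncurry _ ?_
  exact key j
end

section
/- Let μ be a probability measure on ℕ which is non-trivial and critical, and let (V_n)_{n∈ℕ}, (H_l)_{l∈ℕ} and ℒ_1 be as in the accompanying setup. Define Λ_0(λ) = −log E[exp(−λ ℒ_1)] for λ ≥ 0. Then for every b ∈ (1, ∞), every m ∈ ℕ and every n ∈ ℕ*, E[ |H_{m+n} − min_{m ≤ k ≤ m+n} H_k|^b ] ≤ e · b · Γ(b) · (Λ_0(1/n))^{−b}. -/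
open MeasureTheory ProbabilityTheory
open scoped ENNReal

/-- The discrete height process of the path `V`:
`H l = #{ m ∈ {0, …, l-1} : V m = min_{m ≤ j ≤ l} V j }`. -/
noncomputable def heightOfZ (V : ℕ → ℤ) (l : ℕ) : ℕ :=
  ((Finset.range l).filter fun m => ∀ j ∈ Finset.Icc m l, V m ≤ V j).card

/-- The first weak ascending ladder epoch `ℒ₁ = inf { k ≥ 1 : V k = max_{0 ≤ j ≤ k} V j }`. -/
noncomputable def ladderTime {Ω : Type*} (V : ℕ → Ω → ℤ) (ω : Ω) : ℕ :=
  sInf {k : ℕ | 1 ≤ k ∧ ∀ j ≤ k, V j ω ≤ V k ω}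

/-- `Λ₀(λ) = - log E[exp (-λ ℒ₁)]`. -/
noncomputable def Lambda0 {Ω : Type*} [MeasurableSpace Ω] (P : Measure Ω) (V : ℕ → Ω → ℤ)
    (lam : ℝ) : ℝ :=
  - Real.log (∫ ω, Real.exp (-lam * (ladderTime V ω : ℝ)) ∂P)

namespace S15

/-- Partial sums of an increment sequence. -/
def W (x : ℕ → ℤ) (s : ℕ) : ℤ := ∑ t ∈ Finset.range s, x t

/-- `i` is a weak ascending ladder epoch (record) of the walk with increments `x`. -/
def isRec (x : ℕ → ℤ) (i : ℕ) : Prop := 1 ≤ i ∧ ∀ s ≤ i, W x s ≤ W x i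

instance (x : ℕ → ℤ) : DecidablePred (isRec x) := fun _ => by
  unfold isRec; infer_instance

/-- Number of records in `[1, r]`. -/
def N (x : ℕ → ℤ) (r : ℕ) : ℕ := ((Finset.Icc 1 r).filter (isRec x)).card

/-- Next record after time `t` (junk value `0` if none). -/
noncomputable def tNext (x : ℕ → ℤ) (t : ℕ) : ℕ := sInf {i | t < i ∧ isRec x i}

/-- `j`-th record time. -/
noncomputable def T (x : ℕ → ℤ) : ℕ → ℕ
  | 0 => 0
  | j + 1 => tNext x (T x j)

def shift (x : ℕ → ℤ) (k : ℕ) : ℕ → ℤ := fun t => x (k + t)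

noncomputable def g (lam : ℝ) (r j : ℕ) (x : ℕ → ℤ) : ℝ :=
  if j ≤ N x r then Real.exp (-lam * (T x j : ℝ)) else 0

lemma g_nonneg (lam : ℝ) (r j : ℕ) (x : ℕ → ℤ) : 0 ≤ g lam r j x := by
  unfold g; split
  · exact (Real.exp_pos _).le
  · exact le_rfl

lemma g_le_one (lam : ℝ) (hlam : 0 ≤ lam) (r j : ℕ) (x : ℕ → ℤ) : g lam r j x ≤ 1 := by
  unfold g; split
  · rw [← Real.exp_zero]
    apply Real.exp_le_exp.2
    have : (0:ℝ) ≤ (T x j : ℝ) := Nat.cast_nonneg _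
    nlinarith
  · norm_num

lemma W_add (x : ℕ → ℤ) (k s : ℕ) : W x (k + s) = W x k + W (shift x k) s := by
  induction s with
  | zero => simp [W]
  | succ s ih =>
    rw [show k + (s+1) = (k+s) + 1 by ring]
    simp only [W, Finset.sum_range_succ] at *
    rw [ih]; simp [shift]; ring

lemma isRec_shift {x : ℕ → ℤ} {k : ℕ} (hk : isRec x k) {i : ℕ} (hi : k < i) :
    isRec x i ↔ isRec (shift x k) (i - k) := by
  have h3 : k + (i - k) = i := by omega
  have hWi : W x i = W x k + W (shift x k) (i - k) := by
    have := W_add x k (i - k); rwa [h3] at this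
  constructor
  · rintro ⟨-, h2⟩
    refine ⟨by omega, fun s hs => ?_⟩
    have h1 : W x (k + s) ≤ W x i := h2 (k + s) (by omega)
    rw [W_add, hWi] at h1
    omega
  · rintro ⟨-, h2⟩
    refine ⟨by omega, fun s hs => ?_⟩
    rcases le_or_gt s k with hsk | hsk
    · have h0 : W (shift x k) 0 ≤ W (shift x k) (i - k) := h2 0 (by omega)
      have hz : W (shift x k) 0 = 0 := by simp [W]
      rw [hz] at h0
      have hsl : W x s ≤ W x k := hk.2 s hsk
      rw [hWi]; omega
    · have h1 : W (shift x k) (s - k) ≤ W (shift x k) (i - k) := h2 (s - k) (by omega)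
      have h4 : k + (s - k) = s := by omega
      have hWs : W x s = W x k + W (shift x k) (s - k) := by
        have := W_add x k (s - k); rwa [h4] at this
      rw [hWs, hWi]; omega

lemma N_mono (x : ℕ → ℤ) {r r' : ℕ} (h : r ≤ r') : N x r ≤ N x r' :=
  Finset.card_le_card (Finset.filter_subset_filter _ (by
    intro i hi; simp only [Finset.mem_Icc] at *; omega))

lemma exists_rec_of_lt {x : ℕ → ℤ} {a b : ℕ} (hab : a ≤ b) (h : N x a < N x b) :
    ∃ i, a < i ∧ i ≤ b ∧ isRec x i := by
  by_contra hc
  push_neg at hc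
  have : (Finset.Icc 1 b).filter (isRec x) ⊆ (Finset.Icc 1 a).filter (isRec x) := by
    intro i hi
    simp only [Finset.mem_filter, Finset.mem_Icc] at *
    refine ⟨⟨hi.1.1, ?_⟩, hi.2⟩
    by_contra hia
    exact absurd hi.2 (by have := hc i (by omega) hi.1.2; exact this)
  exact absurd (Finset.card_le_card this) (by unfold N at h; omega)

lemma tNext_spec {x : ℕ → ℤ} {t : ℕ} (h : ∃ i, t < i ∧ isRec x i) :
    t < tNext x t ∧ isRec x (tNext x t) ∧ ∀ i, t < i → isRec x i → tNext x t ≤ i := by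
  have hne : {i | t < i ∧ isRec x i}.Nonempty := h
  have hmem := Nat.sInf_mem hne
  exact ⟨hmem.1, hmem.2, fun i hi hri => Nat.sInf_le ⟨hi, hri⟩⟩

lemma N_succ_rec {x : ℕ → ℤ} {t u : ℕ} (htu : t < u) (hu : isRec x u)
    (hmin : ∀ i, t < i → isRec x i → u ≤ i) : N x u = N x t + 1 := by
  have hsplit : (Finset.Icc 1 u).filter (isRec x) =
      insert u ((Finset.Icc 1 t).filter (isRec x)) := by
    ext i
    simp only [Finset.mem_filter, Finset.mem_Icc, Finset.mem_insert]
    constructor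
    · rintro ⟨⟨h1, h2⟩, h3⟩
      rcases le_or_gt i t with hit | hit
      · exact Or.inr ⟨⟨h1, hit⟩, h3⟩
      · left; have := hmin i hit h3; omega
    · rintro (rfl | ⟨⟨h1, h2⟩, h3⟩)
      · exact ⟨⟨hu.1, le_rfl⟩, hu⟩
      · exact ⟨⟨h1, by omega⟩, h3⟩
  unfold N
  rw [hsplit, Finset.card_insert_of_notMem (by
    simp only [Finset.mem_filter, Finset.mem_Icc]
    rintro ⟨⟨-, h2⟩, -⟩; omega)]

/-- Invariant: if there are at least `j` records in `[1,r]`, then `T x j ≤ r` and there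
are exactly `j` records in `[1, T x j]`. -/
lemma T_inv {x : ℕ → ℤ} : ∀ j r, j ≤ N x r → T x j ≤ r ∧ N x (T x j) = j := by
  intro j
  induction j with
  | zero => intro r _; constructor
            · simp [T]
            · simp [T, N]
  | succ j ih =>
    intro r hj
    obtain ⟨hTr, hNT⟩ := ih r (by omega)
    have hlt : N x (T x j) < N x r := by omega
    obtain ⟨i0, hi0, hi0r, hreci0⟩ := exists_rec_of_lt hTr hlt
    obtain ⟨h1, h2, h3⟩ := tNext_spec ⟨i0, hi0, hreci0⟩
    have hle : tNext x (T x j) ≤ i0 := h3 i0 hi0 hreci0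
    refine ⟨by simpa [T] using le_trans hle hi0r, ?_⟩
    show N x (tNext x (T x j)) = j + 1
    rw [N_succ_rec h1 h2 h3, hNT]

lemma N_zero (x : ℕ → ℤ) : N x 0 = 0 := by simp [N]

lemma tNext0_eq {x : ℕ → ℤ} {k : ℕ} (hk : 1 ≤ k) :
    tNext x 0 = k ↔ (isRec x k ∧ ∀ i, isRec x i → k ≤ i) := by
  constructor
  · intro h
    have hne : {i | 0 < i ∧ isRec x i}.Nonempty := by
      by_contra hc
      rw [Set.not_nonempty_iff_eq_empty] at hc
      unfold tNext at h
      rw [hc, Nat.sInf_empty] at h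
      omega
    have hmem := Nat.sInf_mem hne
    rw [show sInf {i | 0 < i ∧ isRec x i} = tNext x 0 from rfl, h] at hmem
    exact ⟨hmem.2, fun i hi => by
      have : tNext x 0 ≤ i := Nat.sInf_le ⟨hi.1, hi⟩
      omega⟩
  · rintro ⟨h1, h2⟩
    apply le_antisymm
    · exact Nat.sInf_le ⟨by omega, h1⟩
    · exact le_csInf ⟨k, by omega, h1⟩ (fun i hi => h2 i hi.2)

/-- Splitting the record count at the first record. -/
lemma N_split {x : ℕ → ℤ} {k r : ℕ} (hk : 1 ≤ k) (hkr : k ≤ r)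
    (hrec : isRec x k) (hmin : ∀ i, isRec x i → k ≤ i) :
    N x r = 1 + N (shift x k) (r - k) := by
  have hIcc : Finset.Icc 1 r = Finset.Icc 1 k ∪ Finset.Icc (k+1) r := by
    ext i; simp only [Finset.mem_union, Finset.mem_Icc]; omega
  have hdisj : Disjoint ((Finset.Icc 1 k).filter (isRec x))
      ((Finset.Icc (k+1) r).filter (isRec x)) := by
    apply Finset.disjoint_filter_filter
    simp only [Finset.disjoint_left, Finset.mem_Icc]
    intro i h1 h2; omega
  have h1 : (Finset.Icc 1 k).filter (isRec x) = {k} := by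
    ext i
    simp only [Finset.mem_filter, Finset.mem_Icc, Finset.mem_singleton]
    constructor
    · rintro ⟨⟨hi1, hi2⟩, hi3⟩
      have := hmin i hi3; omega
    · rintro rfl; exact ⟨⟨hk, le_rfl⟩, hrec⟩
  have h2 : ((Finset.Icc (k+1) r).filter (isRec x)).card
      = ((Finset.Icc 1 (r-k)).filter (isRec (shift x k))).card := by
    apply Finset.card_bij' (fun i _ => i - k) (fun s _ => k + s)
    · intro i hi
      simp only [Finset.mem_filter, Finset.mem_Icc] at hi ⊢
      refine ⟨by omega, ?_⟩
      exact (isRec_shift hrec (by omega)).1 hi.2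
    · intro s hs
      simp only [Finset.mem_filter, Finset.mem_Icc] at hs ⊢
      refine ⟨by omega, ?_⟩
      have := (isRec_shift hrec (show k < k + s by omega)).2
      rw [show k + s - k = s by omega] at this
      exact this hs.2
    · intro i hi; simp only [Finset.mem_filter, Finset.mem_Icc] at hi; omega
    · intro s hs; simp only [Finset.mem_filter, Finset.mem_Icc] at hs; omega
  unfold N
  rw [hIcc, Finset.filter_union, Finset.card_union_of_disjoint hdisj, h1, h2]
  simp

/-- Shifting record times past the first record. -/
lemma T_shift {x : ℕ → ℤ} {k : ℕ} (hk : 1 ≤ k)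
    (hrec : isRec x k) (hmin : ∀ i, isRec x i → k ≤ i) :
    ∀ j r, j ≤ N (shift x k) r → T x (j+1) = k + T (shift x k) j := by
  intro j
  induction j with
  | zero =>
    intro r _
    show tNext x (T x 0) = k + T (shift x k) 0
    simp only [T]
    rw [(tNext0_eq hk).2 ⟨hrec, hmin⟩]
    omega
  | succ j ih =>
    intro r hj
    obtain ⟨hTr, hNT⟩ := T_inv (x := shift x k) j r (by omega)
    have hlt : N (shift x k) (T (shift x k) j) < N (shift x k) r := by omega
    obtain ⟨i0, hi0, hi0r, hreci0⟩ := exists_rec_of_lt hTr hlt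
    show tNext x (T x (j+1)) = k + tNext (shift x k) (T (shift x k) j)
    rw [ih r (by omega)]
    set t := T (shift x k) j with ht
    -- sets correspond
    have hset : ∀ i, (k + t < i ∧ isRec x i) ↔ (∃ s, t < s ∧ isRec (shift x k) s ∧ i = k + s) := by
      intro i
      constructor
      · rintro ⟨hi1, hi2⟩
        refine ⟨i - k, by omega, (isRec_shift hrec (by omega)).1 hi2, by omega⟩
      · rintro ⟨s, hs1, hs2, rfl⟩
        refine ⟨by omega, ?_⟩
        have := (isRec_shift hrec (show k < k + s by omega)).2
        rw [show k + s - k = s by omega] at this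
        exact this hs2
    have hne : {s | t < s ∧ isRec (shift x k) s}.Nonempty := ⟨i0, hi0, hreci0⟩
    have ha := Nat.sInf_mem hne
    set a := sInf {s | t < s ∧ isRec (shift x k) s} with haeq
    have h1 : tNext x (k + t) ≤ k + a := Nat.sInf_le ((hset (k+a)).2 ⟨a, ha.1, ha.2, rfl⟩)
    have h2 : k + a ≤ tNext x (k + t) := by
      apply le_csInf ⟨k + a, (hset (k+a)).2 ⟨a, ha.1, ha.2, rfl⟩⟩
      rintro i hi
      obtain ⟨s, hs1, hs2, rfl⟩ := (hset i).1 hi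
      have : a ≤ s := Nat.sInf_le ⟨hs1, hs2⟩
      omega
    show tNext x (k + t) = k + a
    omega

/-- Key decomposition of `g` over the value of the first record time. -/
lemma g_decomp (lam : ℝ) (j r : ℕ) (x : ℕ → ℤ) :
    g lam r (j+1) x = ∑ k ∈ Finset.Icc 1 r,
      (if tNext x 0 = k then Real.exp (-lam * (k:ℝ)) else 0) * g lam (r-k) j (shift x k) := by
  by_cases h1 : N x r = 0
  · rw [show g lam r (j+1) x = 0 by unfold g; rw [if_neg (by omega)]]
    symm
    apply Finset.sum_eq_zero
    intro k hk
    simp only [Finset.mem_Icc] at hk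
    rw [if_neg, zero_mul]
    intro hc
    obtain ⟨hreck, -⟩ := (tNext0_eq (by omega)).1 hc
    have : k ∈ (Finset.Icc 1 r).filter (isRec x) :=
      Finset.mem_filter.2 ⟨Finset.mem_Icc.2 ⟨hk.1, hk.2⟩, hreck⟩
    have := Finset.card_pos.2 ⟨k, this⟩
    unfold N at h1; omega
  · have hposN : 0 < N x r := by omega
    have h0 : N x 0 < N x r := by rw [N_zero]; omega
    obtain ⟨i0, hi0pos, hi0r, hreci0⟩ := exists_rec_of_lt (Nat.zero_le r) h0
    have hne : {i | 0 < i ∧ isRec x i}.Nonempty := ⟨i0, hi0pos, hreci0⟩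
    have hmem := Nat.sInf_mem hne
    set k0 := tNext x 0 with hk0
    have hk0pos : 1 ≤ k0 := hmem.1
    have hreck0 : isRec x k0 := hmem.2
    have hmin : ∀ i, isRec x i → k0 ≤ i := fun i hi => Nat.sInf_le ⟨hi.1, hi⟩
    have hk0r : k0 ≤ r := le_trans (hmin i0 hreci0) hi0r
    rw [Finset.sum_eq_single k0]
    · rw [if_pos rfl]
      have hNs : N x r = 1 + N (shift x k0) (r - k0) := N_split hk0pos hk0r hreck0 hmin
      by_cases hj : j ≤ N (shift x k0) (r - k0)
      · have hTs : T x (j+1) = k0 + T (shift x k0) j := T_shift hk0pos hreck0 hmin j (r - k0) hj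
        unfold g
        rw [if_pos (by omega), if_pos hj, hTs, ← Real.exp_add]
        congr 1
        push_cast
        ring
      · unfold g
        rw [if_neg (by omega), if_neg hj, mul_zero]
    · intro k hk hkne
      rw [if_neg (fun hc => hkne hc.symm), zero_mul]
    · intro hc
      exact absurd (Finset.mem_Icc.2 ⟨hk0pos, hk0r⟩) hc

section Prefix
variable {x y : ℕ → ℤ} {r : ℕ}

lemma W_prefix (hag : ∀ t < r, x t = y t) {s : ℕ} (hs : s ≤ r) : W x s = W y s :=
  Finset.sum_congr rfl (fun t ht => hag t (by simp only [Finset.mem_range] at ht; omega))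

lemma isRec_prefix (hag : ∀ t < r, x t = y t) {i : ℕ} (hi : i ≤ r) :
    isRec x i ↔ isRec y i := by
  unfold isRec
  constructor <;> rintro ⟨h1, h2⟩ <;> refine ⟨h1, fun s hs => ?_⟩
  · rw [← W_prefix hag (le_trans hs hi), ← W_prefix hag hi]; exact h2 s hs
  · rw [W_prefix hag (le_trans hs hi), W_prefix hag hi]; exact h2 s hs

lemma N_prefix (hag : ∀ t < r, x t = y t) {r' : ℕ} (hr' : r' ≤ r) : N x r' = N y r' := by
  unfold N
  apply Finset.card_bij' (fun i _ => i) (fun i _ => i) <;>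
    intro i hi <;> simp only [Finset.mem_filter, Finset.mem_Icc] at * <;>
    first
      | exact ⟨hi.1, (isRec_prefix hag (by omega)).1 hi.2⟩
      | exact ⟨hi.1, (isRec_prefix hag (by omega)).2 hi.2⟩
      | rfl

lemma tNext0_prefix (hag : ∀ t < r, x t = y t) {k : ℕ} (hk1 : 1 ≤ k) (hkr : k ≤ r) :
    tNext x 0 = k ↔ tNext y 0 = k := by
  have key : ∀ (u v : ℕ → ℤ), (∀ t < r, u t = v t) → tNext u 0 = k → tNext v 0 = k := by
    intro u v hag' h
    obtain ⟨hrec, hmin⟩ := (tNext0_eq hk1).1 h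
    apply (tNext0_eq hk1).2
    refine ⟨(isRec_prefix hag' hkr).1 hrec, fun i hi => ?_⟩
    by_contra hc
    push_neg at hc
    have : isRec u i := (isRec_prefix hag' (by omega)).2 hi
    have := hmin i this
    omega
  exact ⟨key x y hag, key y x (fun t ht => (hag t ht).symm)⟩

lemma T_prefix (hag : ∀ t < r, x t = y t) : ∀ j, j ≤ N x r → T x j = T y j ∧ T x j ≤ r := by
  intro j
  induction j with
  | zero => exact fun _ => ⟨rfl, by simp [T]⟩
  | succ j ih =>
    intro hj
    obtain ⟨hTeq, hTr⟩ := ih (by omega)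
    obtain ⟨hTr', hNT⟩ := T_inv (x := x) j r (by omega)
    have hTT : T x j = T y j := hTeq
    -- there is a record of x in (T x j, r]
    obtain ⟨i0, hi0, hi0r, hreci0⟩ := exists_rec_of_lt (x := x) hTr' (by omega)
    constructor
    · show tNext x (T x j) = tNext y (T y j)
      rw [← hTT]
      set t := T x j
      have hne : {i | t < i ∧ isRec x i}.Nonempty := ⟨i0, hi0, hreci0⟩
      have hmemx := Nat.sInf_mem hne
      have hax : tNext x t ≤ i0 := Nat.sInf_le ⟨hi0, hreci0⟩
      have haxr : tNext x t ≤ r := le_trans hax hi0r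
      have hrecy : isRec y (tNext x t) := (isRec_prefix hag haxr).1 hmemx.2
      have h1 : tNext y t ≤ tNext x t := Nat.sInf_le ⟨hmemx.1, hrecy⟩
      have hney : {i | t < i ∧ isRec y i}.Nonempty := ⟨tNext x t, hmemx.1, hrecy⟩
      have hmemy := Nat.sInf_mem hney
      have h2 : tNext x t ≤ tNext y t := by
        apply Nat.sInf_le
        refine ⟨hmemy.1, (isRec_prefix hag (le_trans h1 haxr)).2 hmemy.2⟩
      omega
    · show tNext x (T x j) ≤ r
      exact le_trans (Nat.sInf_le ⟨hi0, hreci0⟩) hi0r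

lemma g_prefix (hag : ∀ t < r, x t = y t) (lam : ℝ) (j : ℕ) :
    g lam r j x = g lam r j y := by
  unfold g
  rw [← N_prefix hag le_rfl]
  by_cases hj : j ≤ N x r
  · rw [if_pos hj, if_pos hj, (T_prefix hag j hj).1]
  · rw [if_neg hj, if_neg hj]

end Prefix

section Prob

open MeasureTheory ProbabilityTheory

variable {Ω : Type*} [MeasurableSpace Ω] {P : Measure Ω} [IsProbabilityMeasure P]
  {ν : Measure ℤ} [IsProbabilityMeasure ν]
  {ξ : ℕ → Ω → ℤ} (hmeas : ∀ i, Measurable (ξ i))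
  (hindep : iIndepFun ξ P)
  (hdist : ∀ i, Measure.map (ξ i) P = ν)

lemma measurableSet_int (s : Set ℤ) : MeasurableSet s := (Set.to_countable s).measurableSet

include hmeas in
lemma meas_tuple (r : ℕ) (f : Fin r → ℕ) :
    Measurable (fun ω (i : Fin r) => ξ (f i) ω) :=
  measurable_pi_lambda _ (fun i => hmeas (f i))

include hmeas hindep hdist in
lemma tuple_law (r : ℕ) (f : Fin r → ℕ) (hf : Function.Injective f) :
    Measure.map (fun ω (i : Fin r) => ξ (f i) ω) P = Measure.pi (fun _ => ν) := by
  classical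
  refine (Measure.pi_eq fun s _ => ?_).symm
  rw [Measure.map_apply (meas_tuple hmeas r f) (MeasurableSet.univ_pi (fun i => measurableSet_int _))]
  have hpre : (fun ω (i : Fin r) => ξ (f i) ω) ⁻¹' Set.univ.pi s
      = ⋂ i : Fin r, ξ (f i) ⁻¹' s i := by
    ext ω; simp [Set.mem_pi]
  set sets' : ℕ → Set ℤ := fun q => if h : ∃ i, f i = q then s h.choose else Set.univ with hsets'
  have hsets'_eq : ∀ i : Fin r, sets' (f i) = s i := by
    intro i
    have h : ∃ i', f i' = f i := ⟨i, rfl⟩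
    simp only [hsets', dif_pos h]
    have := h.choose_spec
    rw [hf this]
  set S : Finset ℕ := Finset.image f Finset.univ with hS
  have hiInter : (⋂ i : Fin r, ξ (f i) ⁻¹' s i) = ⋂ q ∈ S, ξ q ⁻¹' sets' q := by
    ext ω
    simp only [Set.mem_iInter, Set.mem_preimage, hS, Finset.mem_image, Finset.mem_univ,
      true_and]
    constructor
    · rintro h q ⟨i, rfl⟩
      rw [hsets'_eq i]; exact h i
    · intro h i
      rw [← hsets'_eq i]; exact h (f i) ⟨i, rfl⟩
  rw [hpre, hiInter, hindep.meas_biInter (fun q _ => ⟨sets' q, measurableSet_int _, rfl⟩)]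
  rw [hS, Finset.prod_image (fun i _ j _ h => hf h)]
  apply Finset.prod_congr rfl
  intro i _
  rw [← hdist (f i), Measure.map_apply (hmeas (f i)) (measurableSet_int _), hsets'_eq i]

include hmeas hindep hdist in
lemma exp_transfer (r : ℕ) (f f' : Fin r → ℕ) (hf : Function.Injective f)
    (hf' : Function.Injective f') (F : (Fin r → ℤ) → ℝ) :
    ∫ ω, F (fun i => ξ (f i) ω) ∂P = ∫ ω, F (fun i => ξ (f' i) ω) ∂P := by
  have h1 := integral_map (μ := P) (meas_tuple hmeas r f).aemeasurable
    (f := F) (measurable_of_countable F).aestronglyMeasurable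
  have h2 := integral_map (μ := P) (meas_tuple hmeas r f').aemeasurable
    (f := F) (measurable_of_countable F).aestronglyMeasurable
  rw [← h1, ← h2, tuple_law hmeas hindep hdist r f hf, tuple_law hmeas hindep hdist r f' hf']

/-- Extension of a finite tuple to an infinite sequence. -/
def ext (r : ℕ) (y : Fin r → ℤ) : ℕ → ℤ := fun t => if h : t < r then y ⟨t, h⟩ else 0

lemma ext_agree (r : ℕ) (h : ℕ → ℕ) (ω : Ω) :
    ∀ t < r, (fun t' => ξ (h t') ω) t = ext r (fun i : Fin r => ξ (h i) ω) t := by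
  intro t ht
  simp [ext, ht]

end Prob

section Prob2

open MeasureTheory ProbabilityTheory

variable {Ω : Type*} [MeasurableSpace Ω] {P : Measure Ω} [IsProbabilityMeasure P]
  {ν : Measure ℤ} [IsProbabilityMeasure ν]
  {ξ : ℕ → Ω → ℤ} (hmeas : ∀ i, Measurable (ξ i))
  (hindep : iIndepFun ξ P)
  (hdist : ∀ i, Measure.map (ξ i) P = ν)

lemma measurableSet_pi_int {α : Type*} [Countable α] [MeasurableSpace α]
    [MeasurableSingletonClass α] (s : Set α) : MeasurableSet s :=
  (Set.to_countable s).measurableSet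

include hmeas in
lemma meas_g (lam : ℝ) (r j : ℕ) (f : ℕ → ℕ) :
    Measurable (fun ω => g lam r j (fun t => ξ (f t) ω)) := by
  have hrw : (fun ω => g lam r j (fun t => ξ (f t) ω))
      = (fun y => g lam r j (ext r y)) ∘ (fun ω (i : Fin r) => ξ (f i) ω) := by
    funext ω
    exact g_prefix (ext_agree r f ω) lam j
  rw [hrw]
  exact (measurable_of_countable _).comp (meas_tuple hmeas r fun i => f i)

include hmeas in
lemma integrable_g (lam : ℝ) (hlam : 0 ≤ lam) (r j : ℕ) (f : ℕ → ℕ) :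
    Integrable (fun ω => g lam r j (fun t => ξ (f t) ω)) P := by
  refine Integrable.mono' (integrable_const 1) (meas_g hmeas lam r j f).aestronglyMeasurable
    (Filter.Eventually.of_forall fun ω => ?_)
  rw [Real.norm_eq_abs, abs_of_nonneg (g_nonneg _ _ _ _)]
  exact g_le_one lam hlam r j _

include hmeas in
lemma meas_tNext0 (f : ℕ → ℕ) :
    Measurable (fun ω => tNext (fun t => ξ (f t) ω) 0) := by
  have key : ∀ k : ℕ, 1 ≤ k → MeasurableSet {ω | tNext (fun t => ξ (f t) ω) 0 = k} := by
    intro k hk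
    have hrw : {ω | tNext (fun t => ξ (f t) ω) 0 = k}
        = (fun ω (i : Fin k) => ξ (f i) ω) ⁻¹'
          {y : Fin k → ℤ | tNext (ext k y) 0 = k} := by
      ext ω
      simp only [Set.mem_setOf_eq, Set.mem_preimage]
      exact tNext0_prefix (ext_agree k f ω) hk le_rfl
    rw [hrw]
    exact (meas_tuple hmeas k _) (measurableSet_pi_int _)
  apply measurable_to_countable'
  intro k
  match k with
  | (k+1) => exact key (k+1) (by omega)
  | 0 =>
    have : (fun ω => tNext (fun t => ξ (f t) ω) 0) ⁻¹' {0}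
        = (⋃ k : ℕ, {ω | tNext (fun t => ξ (f t) ω) 0 = k + 1})ᶜ := by
      ext ω
      simp only [Set.mem_preimage, Set.mem_singleton_iff, Set.mem_compl_iff, Set.mem_iUnion,
        Set.mem_setOf_eq]
      constructor
      · intro h hc; obtain ⟨k, hk⟩ := hc; omega
      · intro h
        by_contra hc
        exact h ⟨tNext (fun t => ξ (f t) ω) 0 - 1, by omega⟩
    rw [this]
    exact (MeasurableSet.iUnion fun k => key (k+1) (by omega)).compl

include hmeas in
lemma meas_expT1 (lam : ℝ) (f : ℕ → ℕ) :
    Measurable (fun ω => Real.exp (-lam * (T (fun t => ξ (f t) ω) 1 : ℝ))) := by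
  have : (fun ω => Real.exp (-lam * (T (fun t => ξ (f t) ω) 1 : ℝ)))
      = (fun v : ℕ => Real.exp (-lam * (v : ℝ))) ∘ (fun ω => tNext (fun t => ξ (f t) ω) 0) := by
    funext ω; simp only [Function.comp_apply, T]
  rw [this]
  exact (measurable_of_countable _).comp (meas_tNext0 hmeas f)

include hmeas in
lemma integrable_expT1 (lam : ℝ) (hlam : 0 ≤ lam) (f : ℕ → ℕ) :
    Integrable (fun ω => Real.exp (-lam * (T (fun t => ξ (f t) ω) 1 : ℝ))) P := by
  refine Integrable.mono' (integrable_const 1) (meas_expT1 hmeas lam f).aestronglyMeasurable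
    (Filter.Eventually.of_forall fun ω => ?_)
  rw [Real.norm_eq_abs, abs_of_nonneg (Real.exp_pos _).le, ← Real.exp_zero]
  apply Real.exp_le_exp.2
  have : (0:ℝ) ≤ (T (fun t => ξ (f t) ω) 1 : ℝ) := Nat.cast_nonneg _
  nlinarith

include hmeas hindep hdist in
/-- The main renewal induction: the Laplace-type functional of the `j`-th record time
is bounded by `φ^j` where `φ` is the Laplace transform of the first ladder epoch. -/
lemma main_ind (lam : ℝ) (hlam : 0 ≤ lam) :
    ∀ (j : ℕ) (f : ℕ → ℕ), Function.Injective f → ∀ (r : ℕ),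
    ∫ ω, g lam r j (fun t => ξ (f t) ω) ∂P
      ≤ (∫ ω, Real.exp (-lam * (T (fun t => ξ t ω) 1 : ℝ)) ∂P) ^ j := by
  set φ := ∫ ω, Real.exp (-lam * (T (fun t => ξ t ω) 1 : ℝ)) ∂P with hφ
  have hφ0 : 0 ≤ φ := integral_nonneg fun ω => (Real.exp_pos _).le
  intro j
  induction j with
  | zero =>
    intro f hf r
    have h1 : ∀ ω : Ω, g lam r 0 (fun t => ξ (f t) ω) = 1 := by
      intro ω; unfold g; rw [if_pos (Nat.zero_le _)]; simp [T]
    rw [integral_congr_ae (Filter.Eventually.of_forall h1)]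
    simp
  | succ j ih =>
    intro f hf r
    have hdecomp : (fun ω => g lam r (j+1) (fun t => ξ (f t) ω))
        = fun ω => ∑ k ∈ Finset.Icc 1 r,
            (if tNext (fun t => ξ (f t) ω) 0 = k then Real.exp (-lam * (k:ℝ)) else 0)
              * g lam (r-k) j (fun t => ξ (f (k+t)) ω) := by
      funext ω
      exact g_decomp lam j r _
    -- measurability and integrability of the pieces
    have measF : ∀ k : ℕ, Measurable (fun ω =>
        (if tNext (fun t => ξ (f t) ω) 0 = k then Real.exp (-lam * (k:ℝ)) else 0)) := by
      intro k
      have : (fun ω => (if tNext (fun t => ξ (f t) ω) 0 = k then Real.exp (-lam * (k:ℝ)) else 0))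
          = (fun v : ℕ => if v = k then Real.exp (-lam * (k:ℝ)) else 0)
            ∘ (fun ω => tNext (fun t => ξ (f t) ω) 0) := rfl
      rw [this]
      exact (measurable_of_countable _).comp (meas_tNext0 hmeas f)
    have Fnonneg : ∀ k (ω : Ω),
        0 ≤ (if tNext (fun t => ξ (f t) ω) 0 = k then Real.exp (-lam * (k:ℝ)) else 0) := by
      intro k ω; split
      · exact (Real.exp_pos _).le
      · exact le_rfl
    have Fle1 : ∀ k, 1 ≤ k → ∀ (ω : Ω),
        (if tNext (fun t => ξ (f t) ω) 0 = k then Real.exp (-lam * (k:ℝ)) else 0) ≤ 1 := by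
      intro k hk ω; split
      · rw [← Real.exp_zero]
        apply Real.exp_le_exp.2
        have : (0:ℝ) ≤ (k:ℝ) := Nat.cast_nonneg _
        nlinarith
      · norm_num
    have intF : ∀ k, 1 ≤ k → Integrable (fun ω =>
        (if tNext (fun t => ξ (f t) ω) 0 = k then Real.exp (-lam * (k:ℝ)) else 0)) P := by
      intro k hk
      refine Integrable.mono' (integrable_const 1) (measF k).aestronglyMeasurable
        (Filter.Eventually.of_forall fun ω => ?_)
      rw [Real.norm_eq_abs, abs_of_nonneg (Fnonneg k ω)]
      exact Fle1 k hk ω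
    have hint : ∀ k ∈ Finset.Icc 1 r, Integrable (fun ω =>
        (if tNext (fun t => ξ (f t) ω) 0 = k then Real.exp (-lam * (k:ℝ)) else 0)
          * g lam (r-k) j (fun t => ξ (f (k+t)) ω)) P := by
      intro k hk
      simp only [Finset.mem_Icc] at hk
      refine Integrable.mono' (integrable_const 1)
        (((measF k).mul (meas_g hmeas lam (r-k) j fun t => f (k+t)))).aestronglyMeasurable
        (Filter.Eventually.of_forall fun ω => ?_)
      rw [Real.norm_eq_abs, abs_of_nonneg (mul_nonneg (Fnonneg k ω) (g_nonneg _ _ _ _))]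
      refine le_trans (mul_le_mul (Fle1 k hk.1 ω) (g_le_one lam hlam _ _ _)
        (g_nonneg _ _ _ _) zero_le_one) (by norm_num)
    rw [hdecomp, integral_finset_sum _ hint]
    -- factor each summand using independence
    have hfactor : ∀ k ∈ Finset.Icc 1 r,
        ∫ ω, (if tNext (fun t => ξ (f t) ω) 0 = k then Real.exp (-lam * (k:ℝ)) else 0)
            * g lam (r-k) j (fun t => ξ (f (k+t)) ω) ∂P
        = (∫ ω, (if tNext (fun t => ξ (f t) ω) 0 = k then Real.exp (-lam * (k:ℝ)) else 0) ∂P)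
            * ∫ ω, g lam (r-k) j (fun t => ξ (f (k+t)) ω) ∂P := by
      intro k hk
      simp only [Finset.mem_Icc] at hk
      classical
      set S : Finset ℕ := (Finset.range k).image f with hSdef
      set Tt : Finset ℕ := (Finset.Ico k r).image f with hTdef
      have hdisj : Disjoint S Tt := by
        rw [Finset.disjoint_left]
        rintro q hq hq'
        obtain ⟨a, ha, rfl⟩ := Finset.mem_image.1 hq
        obtain ⟨c, hc, hfc⟩ := Finset.mem_image.1 hq'
        simp only [Finset.mem_range, Finset.mem_Ico] at ha hc
        have := hf hfc
        omega
      have hbase := hindep.indepFun_finset S Tt hdisj hmeas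
      have hmemS : ∀ i : Fin k, f i ∈ S :=
        fun i => Finset.mem_image.2 ⟨i, Finset.mem_range.2 i.2, rfl⟩
      have hmemT : ∀ i : Fin (r-k), f (k + i) ∈ Tt :=
        fun i => Finset.mem_image.2 ⟨k + i, Finset.mem_Ico.2 ⟨by omega, by have := i.2; omega⟩, rfl⟩
      set FF : ({x // x ∈ S} → ℤ) → ℝ := fun y =>
        if tNext (ext k (fun i : Fin k => y ⟨f i, hmemS i⟩)) 0 = k
          then Real.exp (-lam * (k:ℝ)) else 0 with hFF
      set GG : ({x // x ∈ Tt} → ℤ) → ℝ := fun y =>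
        g lam (r-k) j (ext (r-k) (fun i : Fin (r-k) => y ⟨f (k + i), hmemT i⟩)) with hGG
      have hFeq : (fun ω => (if tNext (fun t => ξ (f t) ω) 0 = k
            then Real.exp (-lam * (k:ℝ)) else 0))
          = FF ∘ (fun ω (i : {x // x ∈ S}) => ξ (i : ℕ) ω) := by
        funext ω
        simp only [Function.comp_apply, hFF]
        congr 1
        · exact propext (tNext0_prefix (ext_agree k f ω) hk.1 le_rfl)
      have hGeq : (fun ω => g lam (r-k) j (fun t => ξ (f (k+t)) ω))
          = GG ∘ (fun ω (i : {x // x ∈ Tt}) => ξ (i : ℕ) ω) := by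
        funext ω
        simp only [Function.comp_apply, hGG]
        exact g_prefix (ext_agree (r-k) (fun t => f (k+t)) ω) lam j
      have hIndep : IndepFun
          (fun ω => (if tNext (fun t => ξ (f t) ω) 0 = k then Real.exp (-lam * (k:ℝ)) else 0))
          (fun ω => g lam (r-k) j (fun t => ξ (f (k+t)) ω)) P := by
        rw [hFeq, hGeq]
        exact hbase.comp (measurable_of_countable _) (measurable_of_countable _)
      have := hIndep.integral_fun_mul_eq_mul_integral
        (measF k).aestronglyMeasurable (meas_g hmeas lam (r-k) j fun t => f (k+t)).aestronglyMeasurable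
      exact this
    rw [Finset.sum_congr rfl hfactor]
    -- bound using IH and the sum over first record values
    have hihbd : ∀ k ∈ Finset.Icc 1 r,
        (∫ ω, (if tNext (fun t => ξ (f t) ω) 0 = k then Real.exp (-lam * (k:ℝ)) else 0) ∂P)
            * (∫ ω, g lam (r-k) j (fun t => ξ (f (k+t)) ω) ∂P)
        ≤ (∫ ω, (if tNext (fun t => ξ (f t) ω) 0 = k then Real.exp (-lam * (k:ℝ)) else 0) ∂P)
            * φ ^ j := by
      intro k hk
      apply mul_le_mul_of_nonneg_left
      · exact ih (fun t => f (k+t)) (fun a b hab => by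
          have := hf hab; omega) (r-k)
      · exact integral_nonneg (fun ω => Fnonneg k ω)
    calc ∑ k ∈ Finset.Icc 1 r,
          (∫ ω, (if tNext (fun t => ξ (f t) ω) 0 = k then Real.exp (-lam * (k:ℝ)) else 0) ∂P)
            * ∫ ω, g lam (r-k) j (fun t => ξ (f (k+t)) ω) ∂P
        ≤ ∑ k ∈ Finset.Icc 1 r,
          (∫ ω, (if tNext (fun t => ξ (f t) ω) 0 = k then Real.exp (-lam * (k:ℝ)) else 0) ∂P)
            * φ ^ j := Finset.sum_le_sum hihbd
      _ = (∑ k ∈ Finset.Icc 1 r,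
          ∫ ω, (if tNext (fun t => ξ (f t) ω) 0 = k then Real.exp (-lam * (k:ℝ)) else 0) ∂P)
            * φ ^ j := (Finset.sum_mul _ _ _).symm
      _ ≤ φ * φ ^ j := by
          apply mul_le_mul_of_nonneg_right _ (pow_nonneg hφ0 j)
          -- transfer each expectation to the identity family and sum
          have htrans : ∀ k ∈ Finset.Icc 1 r,
              ∫ ω, (if tNext (fun t => ξ (f t) ω) 0 = k then Real.exp (-lam * (k:ℝ)) else 0) ∂P
              = ∫ ω, (if tNext (fun t => ξ t ω) 0 = k then Real.exp (-lam * (k:ℝ)) else 0) ∂P := by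
            intro k hk
            simp only [Finset.mem_Icc] at hk
            have h1 : ∀ (h : ℕ → ℕ) (ω : Ω),
                (if tNext (fun t => ξ (h t) ω) 0 = k then Real.exp (-lam * (k:ℝ)) else 0)
                = (fun z : Fin k → ℤ =>
                    if tNext (ext k z) 0 = k then Real.exp (-lam * (k:ℝ)) else 0)
                    (fun i : Fin k => ξ (h i) ω) := by
              intro h ω
              simp only
              congr 1
              exact propext (tNext0_prefix (ext_agree k h ω) hk.1 le_rfl)
            calc ∫ ω, (if tNext (fun t => ξ (f t) ω) 0 = k then Real.exp (-lam * (k:ℝ)) else 0) ∂P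
                = ∫ ω, (fun z : Fin k → ℤ =>
                    if tNext (ext k z) 0 = k then Real.exp (-lam * (k:ℝ)) else 0)
                    (fun i : Fin k => ξ (f i) ω) ∂P := by
                  apply integral_congr_ae (Filter.Eventually.of_forall fun ω => h1 f ω)
              _ = ∫ ω, (fun z : Fin k → ℤ =>
                    if tNext (ext k z) 0 = k then Real.exp (-lam * (k:ℝ)) else 0)
                    (fun i : Fin k => ξ (i : ℕ) ω) ∂P := by
                  exact exp_transfer hmeas hindep hdist k (fun i => f i) (fun i => (i : ℕ))
                    (hf.comp Fin.val_injective) Fin.val_injective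
                    (fun z : Fin k → ℤ =>
                      if tNext (ext k z) 0 = k then Real.exp (-lam * (k:ℝ)) else 0)
              _ = ∫ ω, (if tNext (fun t => ξ t ω) 0 = k then Real.exp (-lam * (k:ℝ)) else 0) ∂P := by
                  apply integral_congr_ae (Filter.Eventually.of_forall fun ω => (h1 id ω).symm)
          rw [Finset.sum_congr rfl htrans]
          have measFid : ∀ k : ℕ, Measurable (fun ω =>
              (if tNext (fun t => ξ t ω) 0 = k then Real.exp (-lam * (k:ℝ)) else 0)) := by
            intro k
            have : (fun ω => (if tNext (fun t => ξ t ω) 0 = k then Real.exp (-lam * (k:ℝ)) else 0))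
                = (fun v : ℕ => if v = k then Real.exp (-lam * (k:ℝ)) else 0)
                  ∘ (fun ω => tNext (fun t => ξ t ω) 0) := rfl
            rw [this]
            exact (measurable_of_countable _).comp (meas_tNext0 hmeas id)
          have Fnonneg_id : ∀ k (ω : Ω),
              0 ≤ (if tNext (fun t => ξ t ω) 0 = k then Real.exp (-lam * (k:ℝ)) else 0) := by
            intro k ω; split
            · exact (Real.exp_pos _).le
            · exact le_rfl
          have intFid : ∀ k, 1 ≤ k → Integrable (fun ω =>
              (if tNext (fun t => ξ t ω) 0 = k then Real.exp (-lam * (k:ℝ)) else 0)) P := by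
            intro k hk1
            refine Integrable.mono' (integrable_const 1) (measFid k).aestronglyMeasurable
              (Filter.Eventually.of_forall fun ω => ?_)
            rw [Real.norm_eq_abs, abs_of_nonneg (Fnonneg_id k ω)]
            split
            · rw [← Real.exp_zero]
              apply Real.exp_le_exp.2
              have : (0:ℝ) ≤ (k:ℝ) := Nat.cast_nonneg _
              nlinarith
            · norm_num
          rw [← integral_finset_sum]
          · apply integral_mono
            · apply integrable_finset_sum
              intro k hk
              simp only [Finset.mem_Icc] at hk
              exact intFid k hk.1
            · exact integrable_expT1 hmeas lam hlam id
            · intro ω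
              simp only
              by_cases hmem : tNext (fun t => ξ t ω) 0 ∈ Finset.Icc 1 r
              · rw [Finset.sum_eq_single (tNext (fun t => ξ t ω) 0)]
                · rw [if_pos rfl]
                  apply le_of_eq
                  congr 1
                · intro c hc hcne
                  exact if_neg fun hcc => hcne hcc.symm
                · intro hc; exact absurd hmem hc
              · rw [Finset.sum_eq_zero]
                · exact (Real.exp_pos _).le
                · intro c hc
                  apply if_neg
                  intro hcc
                  rw [← hcc] at hc
                  exact hmem hc
          · intro k hk
            simp only [Finset.mem_Icc] at hk
            exact intFid k hk.1
      _ = φ ^ (j+1) := by ring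

end Prob2

section Chernoff

open MeasureTheory ProbabilityTheory

variable {Ω : Type*} [MeasurableSpace Ω] {P : Measure Ω} [IsProbabilityMeasure P]
  {ν : Measure ℤ} [IsProbabilityMeasure ν]
  {ξ : ℕ → Ω → ℤ} (hmeas : ∀ i, Measurable (ξ i))
  (hindep : iIndepFun ξ P)
  (hdist : ∀ i, Measure.map (ξ i) P = ν)

include hmeas in
lemma measurableSet_N_event (f : ℕ → ℕ) (j r : ℕ) :
    MeasurableSet {ω | j ≤ N (fun t => ξ (f t) ω) r} := by
  have hrw : {ω | j ≤ N (fun t => ξ (f t) ω) r}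
      = (fun ω (i : Fin r) => ξ (f i) ω) ⁻¹' {y : Fin r → ℤ | j ≤ N (ext r y) r} := by
    ext ω
    simp only [Set.mem_setOf_eq, Set.mem_preimage]
    rw [N_prefix (ext_agree r f ω) le_rfl]
  rw [hrw]
  exact (meas_tuple hmeas r _) (measurableSet_pi_int _)

include hmeas hindep hdist in
lemma chernoff (lam : ℝ) (hlam : 0 ≤ lam) (f : ℕ → ℕ) (hf : Function.Injective f)
    (j r : ℕ) :
    (P {ω | j ≤ N (fun t => ξ (f t) ω) r}).toReal
      ≤ Real.exp (lam * r) * (∫ ω, Real.exp (-lam * (T (fun t => ξ t ω) 1 : ℝ)) ∂P) ^ j := by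
  set E := {ω | j ≤ N (fun t => ξ (f t) ω) r} with hE
  have hEmeas : MeasurableSet E := measurableSet_N_event hmeas f j r
  have hpt : ∀ ω, E.indicator (fun _ => (1:ℝ)) ω
      ≤ Real.exp (lam * r) * g lam r j (fun t => ξ (f t) ω) := by
    intro ω
    by_cases hω : ω ∈ E
    · rw [Set.indicator_of_mem hω]
      have hj : j ≤ N (fun t => ξ (f t) ω) r := hω
      have hT := (T_inv (x := fun t => ξ (f t) ω) j r hj).1
      unfold g
      rw [if_pos hj, ← Real.exp_add]
      rw [show (1:ℝ) = Real.exp 0 from (Real.exp_zero).symm]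
      apply Real.exp_le_exp.2
      have h1 : (T (fun t => ξ (f t) ω) j : ℝ) ≤ (r : ℝ) := by exact_mod_cast hT
      nlinarith
    · rw [Set.indicator_of_notMem hω]
      exact mul_nonneg (Real.exp_pos _).le (g_nonneg _ _ _ _)
  have h1 : (P E).toReal = ∫ ω, E.indicator (fun _ => (1:ℝ)) ω ∂P := by
    rw [integral_indicator_const (1:ℝ) hEmeas]
    simp [Measure.real_def]
  rw [h1]
  calc ∫ ω, E.indicator (fun _ => (1:ℝ)) ω ∂P
      ≤ ∫ ω, Real.exp (lam * r) * g lam r j (fun t => ξ (f t) ω) ∂P := by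
        apply integral_mono ((integrable_const (1:ℝ)).indicator hEmeas)
          ((integrable_g hmeas lam hlam r j f).const_mul _) hpt
    _ = Real.exp (lam * r) * ∫ ω, g lam r j (fun t => ξ (f t) ω) ∂P := integral_const_mul _ _
    _ ≤ _ := by
        apply mul_le_mul_of_nonneg_left (main_ind hmeas hindep hdist lam hlam j f hf r)
          (Real.exp_pos _).le

end Chernoff

section Analytic

open MeasureTheory intervalIntegral

/-- The layer-cake/Gamma estimate. -/
lemma analytic_bound {b c : ℝ} (hb : 1 < b) (hc : 0 < c) (n : ℕ) :
    ∑ k ∈ Finset.Icc 1 n, (((k:ℝ))^b - ((k:ℝ)-1)^b) * Real.exp (-(c * k))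
      ≤ b * Real.Gamma b * c ^ (-b) := by
  have hb0 : (0:ℝ) < b := by linarith
  set h : ℝ → ℝ := fun x => b * x ^ (b-1) * Real.exp (-(c * x)) with hh
  have hcont : ∀ a a' : ℝ, 0 ≤ a → ContinuousOn h (Set.uIcc a a') := by
    intro a a' _
    apply ContinuousOn.mul
    · apply ContinuousOn.mul continuousOn_const
      intro x _
      exact (Real.continuousAt_rpow_const x (b-1) (Or.inr (by linarith))).continuousWithinAt
    · exact (Real.continuous_exp.comp (continuous_const.mul continuous_id).neg).continuousOn
  have key : ∀ k : ℕ, 1 ≤ k →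
      (((k:ℝ))^b - ((k:ℝ)-1)^b) * Real.exp (-(c * k))
        ≤ ∫ x in ((k:ℝ)-1)..(k:ℝ), h x := by
    intro k hk
    have hk1 : (1:ℝ) ≤ (k:ℝ) := by exact_mod_cast hk
    have h1 : ∫ x in ((k:ℝ)-1)..(k:ℝ), b * x ^ (b-1) = ((k:ℝ))^b - ((k:ℝ)-1)^b := by
      rw [intervalIntegral.integral_const_mul, integral_rpow (Or.inl (by linarith))]
      rw [show b - 1 + 1 = b by ring]
      field_simp
    have h2 : (((k:ℝ))^b - ((k:ℝ)-1)^b) * Real.exp (-(c * k))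
        = ∫ x in ((k:ℝ)-1)..(k:ℝ), b * x ^ (b-1) * Real.exp (-(c * k)) := by
      rw [intervalIntegral.integral_mul_const, h1]
    rw [h2]
    apply intervalIntegral.integral_mono_on (by linarith)
    · apply ContinuousOn.intervalIntegrable
      apply ContinuousOn.mul
      · apply ContinuousOn.mul continuousOn_const
        intro x _
        exact (Real.continuousAt_rpow_const x (b-1) (Or.inr (by linarith))).continuousWithinAt
      · exact continuousOn_const
    · exact (hcont ((k:ℝ)-1) (k:ℝ) (by linarith)).intervalIntegrable
    · intro x hx
      obtain ⟨hx1, hx2⟩ := hx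
      have hx0 : 0 ≤ x := by linarith
      apply mul_le_mul_of_nonneg_left
      · apply Real.exp_le_exp.2
        nlinarith
      · positivity
  calc ∑ k ∈ Finset.Icc 1 n, (((k:ℝ))^b - ((k:ℝ)-1)^b) * Real.exp (-(c * k))
      ≤ ∑ k ∈ Finset.Icc 1 n, ∫ x in ((k:ℝ)-1)..(k:ℝ), h x := by
        apply Finset.sum_le_sum
        intro k hk
        exact key k (Finset.mem_Icc.1 hk).1
    _ = ∑ i ∈ Finset.range n, ∫ x in ((i:ℕ):ℝ)..((i+1:ℕ):ℝ), h x := by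
        apply Finset.sum_nbij' (fun k => k - 1) (fun i => i + 1)
        · intro k hk; simp only [Finset.mem_Icc] at hk; simp only [Finset.mem_range]; omega
        · intro i hi; simp only [Finset.mem_range] at hi; simp only [Finset.mem_Icc]; omega
        · intro k hk; simp only [Finset.mem_Icc] at hk; omega
        · intro i _; omega
        · intro k hk
          simp only [Finset.mem_Icc] at hk
          have : ((k - 1 : ℕ) : ℝ) = (k:ℝ) - 1 := by
            have : (1:ℕ) ≤ k := hk.1
            push_cast [this]; ring
          rw [show ((k-1) + 1 : ℕ) = k by omega, this]
    _ = ∫ x in ((0:ℕ):ℝ)..((n:ℕ):ℝ), h x := by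
        apply intervalIntegral.sum_integral_adjacent_intervals (a := fun i : ℕ => ((i:ℕ):ℝ))
        intro i _
        apply (hcont _ _ (Nat.cast_nonneg i)).intervalIntegrable
    _ ≤ ∫ x in Set.Ioi (0:ℝ), h x := by
        rw [intervalIntegral.integral_of_le (by exact_mod_cast Nat.zero_le n), Nat.cast_zero]
        apply setIntegral_mono_set
        · -- IntegrableOn h (Ioi 0)
          have heq : Set.EqOn h (fun x => b * (x ^ (b-1) * Real.exp (-c * x ^ (1:ℝ))))
              (Set.Ioi 0) := by
            intro x _
            simp only [hh, Real.rpow_one]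
            ring_nf
          apply IntegrableOn.congr_fun _ heq.symm measurableSet_Ioi
          exact (integrableOn_rpow_mul_exp_neg_mul_rpow (by linarith) zero_lt_one hc).const_mul b
        · filter_upwards [MeasureTheory.self_mem_ae_restrict measurableSet_Ioi] with x hx
          simp only [Pi.zero_apply]
          have hx0 : (0:ℝ) ≤ x := le_of_lt hx
          have h1 : (0:ℝ) ≤ x ^ (b-1) := Real.rpow_nonneg hx0 _
          have h2 : (0:ℝ) ≤ Real.exp (-(c*x)) := (Real.exp_pos _).le
          simp only [hh]
          exact mul_nonneg (mul_nonneg hb0.le h1) h2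
        · exact (Set.Ioc_subset_Ioi_self).eventuallyLE
    _ ≤ b * Real.Gamma b * c ^ (-b) := by
        have : ∫ x in Set.Ioi (0:ℝ), h x
            = b * ∫ x in Set.Ioi (0:ℝ), x ^ (b-1) * Real.exp (-(c * x)) := by
          rw [← MeasureTheory.integral_const_mul]
          apply setIntegral_congr_fun measurableSet_Ioi
          intro x _
          simp only [hh]; ring
        rw [this, Real.integral_rpow_mul_exp_neg_mul_Ioi hb0 hc]
        rw [one_div, Real.inv_rpow hc.le, ← Real.rpow_neg hc.le]
        ring_nf
        exact le_rfl

end Analytic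

section Phi

open MeasureTheory ProbabilityTheory

variable {Ω : Type*} [MeasurableSpace Ω] {P : Measure Ω} [IsProbabilityMeasure P]
  {ν : Measure ℤ} [IsProbabilityMeasure ν]
  {ξ : ℕ → Ω → ℤ} (hmeas : ∀ i, Measurable (ξ i))
  (hdist : ∀ i, Measure.map (ξ i) P = ν)

include hmeas in
lemma phi_pos (lam : ℝ) (hlam : 0 ≤ lam) :
    0 < ∫ ω, Real.exp (-lam * (T (fun t => ξ t ω) 1 : ℝ)) ∂P := by
  rw [integral_pos_iff_support_of_nonneg_ae
    (Filter.Eventually.of_forall fun ω => (Real.exp_pos _).le)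
    (integrable_expT1 hmeas lam hlam (fun t => t))]
  have : Function.support (fun ω => Real.exp (-lam * (T (fun t => ξ t ω) 1 : ℝ)))
      = Set.univ := Set.eq_univ_of_forall fun ω => (Real.exp_pos _).ne'
  rw [this]
  simp

include hmeas hdist in
lemma phi_lt_one (lam : ℝ) (hlam : 0 < lam) (hν : 0 < ν {z : ℤ | 0 ≤ z}) :
    ∫ ω, Real.exp (-lam * (T (fun t => ξ t ω) 1 : ℝ)) ∂P < 1 := by
  set A : Set Ω := ξ 0 ⁻¹' {z : ℤ | 0 ≤ z} with hA
  have hAmeas : MeasurableSet A := (hmeas 0) (measurableSet_int _)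
  have hPA : P A = ν {z : ℤ | 0 ≤ z} := by
    rw [hA, ← Measure.map_apply (hmeas 0) (measurableSet_int _), hdist 0]
  have hp : 0 < (P A).toReal :=
    ENNReal.toReal_pos (by rw [hPA]; exact hν.ne') (measure_ne_top _ _)
  have hp1 : (P A).toReal ≤ 1 := by
    have := prob_le_one (μ := P) (s := A)
    exact ENNReal.toReal_le_of_le_ofReal zero_le_one (by simpa using this)
  have hbd : ∀ ω, Real.exp (-lam * (T (fun t => ξ t ω) 1 : ℝ))
      ≤ 1 - (1 - Real.exp (-lam)) * A.indicator (fun _ => (1:ℝ)) ω := by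
    intro ω
    by_cases hω : ω ∈ A
    · rw [Set.indicator_of_mem hω]
      have hx0 : 0 ≤ ξ 0 ω := hω
      have hrec1 : isRec (fun t => ξ t ω) 1 := by
        refine ⟨le_rfl, fun s hs => ?_⟩
        interval_cases s
        · simp only [W, Finset.range_zero, Finset.sum_empty, Finset.range_one,
            Finset.sum_singleton]
          omega
        · exact le_rfl
      have hT1 : 1 ≤ T (fun t => ξ t ω) 1 := by
        show 1 ≤ tNext (fun t => ξ t ω) 0
        have := (Nat.sInf_mem (⟨1, by omega, hrec1⟩ :
          {i | 0 < i ∧ isRec (fun t => ξ t ω) i}.Nonempty))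
        exact this.1
      have : Real.exp (-lam * (T (fun t => ξ t ω) 1 : ℝ)) ≤ Real.exp (-lam) := by
        apply Real.exp_le_exp.2
        have : (1:ℝ) ≤ (T (fun t => ξ t ω) 1 : ℝ) := by exact_mod_cast hT1
        nlinarith
      linarith
    · rw [Set.indicator_of_notMem hω]
      have : Real.exp (-lam * (T (fun t => ξ t ω) 1 : ℝ)) ≤ 1 := by
        rw [← Real.exp_zero]
        apply Real.exp_le_exp.2
        have : (0:ℝ) ≤ (T (fun t => ξ t ω) 1 : ℝ) := Nat.cast_nonneg _
        nlinarith
      linarith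
  have hint2 : Integrable (fun ω => 1 - (1 - Real.exp (-lam)) * A.indicator (fun _ => (1:ℝ)) ω) P := by
    apply Integrable.sub (integrable_const 1)
    exact (((integrable_const (1:ℝ)).indicator hAmeas)).const_mul _
  calc ∫ ω, Real.exp (-lam * (T (fun t => ξ t ω) 1 : ℝ)) ∂P
      ≤ ∫ ω, (1 - (1 - Real.exp (-lam)) * A.indicator (fun _ => (1:ℝ)) ω) ∂P :=
        integral_mono (integrable_expT1 hmeas lam hlam.le (fun t => t)) hint2 hbd
    _ = 1 - (1 - Real.exp (-lam)) * (P A).toReal := by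
        rw [integral_sub (integrable_const 1)
          (((((integrable_const (1:ℝ))).indicator hAmeas)).const_mul (1 - Real.exp (-lam)))]
        rw [integral_const_mul, integral_indicator_const (1:ℝ) hAmeas]
        simp [Measure.real_def]
    _ < 1 := by
        have he : Real.exp (-lam) < 1 := by
          rw [← Real.exp_zero]
          exact Real.exp_lt_exp.2 (by linarith)
        nlinarith

end Phi

section Height

/-- Link between `ladderTime` and the first record time. -/
lemma ladder_eq_T1 (u : ℕ → ℤ) (V' : ℕ → ℤ) (hV' : ∀ j, V' j = W u j) :
    sInf {k : ℕ | 1 ≤ k ∧ ∀ j ≤ k, V' j ≤ V' k} = T u 1 := by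
  show _ = tNext u 0
  unfold tNext
  congr 1
  ext k
  simp only [Set.mem_setOf_eq, hV']
  unfold isRec
  constructor
  · rintro ⟨h1, h2⟩; exact ⟨by omega, h1, h2⟩
  · rintro ⟨_, h1, h2⟩; exact ⟨h1, h2⟩

variable (u : ℕ → ℤ) (m n : ℕ)

/-- The partial-sum path. -/
def Vs : ℕ → ℤ := fun j => ∑ t ∈ Finset.range j, u t

/-- The reversed increments of the window `[m, m+n)`. -/
def xrev : ℕ → ℤ := fun t => u (m + n - 1 - t)

/-- The set of "old" records surviving to time `m+n`. -/
def oldRecs : Finset ℕ :=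
  (Finset.range m).filter (fun m' => ∀ j ∈ Finset.Icc m' (m + n), Vs u m' ≤ Vs u j)

lemma height_lower {k : ℕ} (hk : m ≤ k) (hk2 : k ≤ m + n) :
    (oldRecs u m n).card ≤ heightOfZ (Vs u) k := by
  apply Finset.card_le_card
  intro m' hm'
  simp only [oldRecs, heightOfZ, Finset.mem_filter, Finset.mem_range] at hm' ⊢
  refine ⟨by omega, fun j hj => ?_⟩
  simp only [Finset.mem_Icc] at hj
  exact hm'.2 j (Finset.mem_Icc.2 ⟨hj.1, by omega⟩)

lemma W_xrev {s : ℕ} (hs : s ≤ n) :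
    W (xrev u m n) s = Vs u (m + n) - Vs u (m + n - s) := by
  have h1 : Vs u (m+n) - Vs u (m+n-s) = ∑ j ∈ Finset.Ico (m+n-s) (m+n), u j := by
    rw [Finset.sum_Ico_eq_sub _ (by omega)]
    simp only [Vs]
  rw [h1]
  unfold W xrev
  apply Finset.sum_nbij' (fun t => m + n - 1 - t) (fun j => m + n - 1 - j)
  · intro t ht; simp only [Finset.mem_range] at ht; simp only [Finset.mem_Ico]; omega
  · intro j hj; simp only [Finset.mem_Ico] at hj; simp only [Finset.mem_range]; omega
  · intro t ht; simp only [Finset.mem_range] at ht; omega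
  · intro j hj; simp only [Finset.mem_Ico] at hj; omega
  · intro t ht; rfl

lemma cond_iff_isRec (hn : 0 < n) {m' : ℕ} (hm' : m ≤ m') (hm'2 : m' < m + n) :
    (∀ j ∈ Finset.Icc m' (m + n), Vs u m' ≤ Vs u j) ↔ isRec (xrev u m n) (m + n - m') := by
  set i := m + n - m' with hi
  have hi1 : 1 ≤ i := by omega
  have hin : i ≤ n := by omega
  constructor
  · intro h
    refine ⟨hi1, fun s hs => ?_⟩
    rw [W_xrev u m n (by omega), W_xrev u m n hin]
    have := h (m + n - s) (Finset.mem_Icc.2 ⟨by omega, by omega⟩)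
    rw [show m + n - i = m' by omega]
    omega
  · rintro ⟨-, h⟩
    intro j hj
    simp only [Finset.mem_Icc] at hj
    have := h (m + n - j) (by omega)
    rw [W_xrev u m n (by omega), W_xrev u m n hin] at this
    rw [show m + n - (m + n - j) = j by omega, show m + n - i = m' by omega] at this
    omega

lemma height_upper (hn : 0 < n) :
    heightOfZ (Vs u) (m + n) ≤ (oldRecs u m n).card + N (xrev u m n) n := by
  unfold heightOfZ
  have hsplit : Finset.range (m+n) = Finset.range m ∪ Finset.Ico m (m+n) := by
    ext i; simp only [Finset.mem_union, Finset.mem_range, Finset.mem_Ico]; omega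
  rw [hsplit, Finset.filter_union]
  apply le_trans (Finset.card_union_le _ _)
  apply Nat.add_le_add
  · apply le_of_eq
    congr 1
  · apply le_of_eq
    unfold N
    apply Finset.card_nbij' (fun m' => m + n - m') (fun i => m + n - i)
    · intro m' hm'
      simp only [Finset.mem_coe, Finset.mem_filter, Finset.mem_Ico] at hm'
      simp only [Finset.mem_coe, Finset.mem_filter, Finset.mem_Icc]
      refine ⟨⟨by omega, by omega⟩, ?_⟩
      exact (cond_iff_isRec u m n hn hm'.1.1 hm'.1.2).1 hm'.2
    · intro i hi
      simp only [Finset.mem_coe, Finset.mem_filter, Finset.mem_Icc] at hi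
      simp only [Finset.mem_coe, Finset.mem_filter, Finset.mem_Ico]
      refine ⟨⟨by omega, by omega⟩, ?_⟩
      have := (cond_iff_isRec u m n hn (m' := m + n - i) (by omega) (by omega)).2
      rw [show m + n - (m + n - i) = i by omega] at this
      exact this hi.2
    · intro m' hm'
      simp only [Finset.mem_coe, Finset.mem_filter, Finset.mem_Ico] at hm'
      dsimp only; omega
    · intro i hi
      simp only [Finset.mem_coe, Finset.mem_filter, Finset.mem_Icc] at hi
      dsimp only; omega

end Height

section Height2

variable (u : ℕ → ℤ) (m n : ℕ)

lemma sInf_le_heightVs :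
    sInf ((fun k => heightOfZ (Vs u) k) '' Set.Icc m (m + n)) ≤ heightOfZ (Vs u) (m + n) :=
  Nat.sInf_le ⟨m + n, Set.mem_Icc.2 ⟨by omega, le_rfl⟩, rfl⟩

lemma D_le_N (hn : 0 < n) :
    heightOfZ (Vs u) (m + n) - sInf ((fun k => heightOfZ (Vs u) k) '' Set.Icc m (m + n))
      ≤ N (xrev u m n) n := by
  have hlow : (oldRecs u m n).card
      ≤ sInf ((fun k => heightOfZ (Vs u) k) '' Set.Icc m (m + n)) := by
    refine le_csInf ⟨_, ⟨m + n, Set.mem_Icc.2 ⟨by omega, le_rfl⟩, rfl⟩⟩ ?_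
    rintro v ⟨k, hk, rfl⟩
    rw [Set.mem_Icc] at hk
    exact height_lower u m n hk.1 hk.2
  have hup := height_upper u m n hn
  omega

lemma N_le_self (x : ℕ → ℤ) (r : ℕ) : N x r ≤ r := by
  have h1 : N x r ≤ (Finset.Icc 1 r).card := Finset.card_filter_le _ _
  rwa [Nat.card_Icc, Nat.add_sub_cancel] at h1

lemma heightVs_prefix {u u' : ℕ → ℤ} {R : ℕ} (hag : ∀ t < R, u t = u' t) {k : ℕ}
    (hk : k ≤ R) : heightOfZ (Vs u) k = heightOfZ (Vs u') k := by
  have hW : ∀ j ≤ R, Vs u j = Vs u' j := fun j hj => W_prefix hag hj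
  unfold heightOfZ
  congr 1
  apply Finset.filter_congr
  intro m' hm'
  rw [Finset.mem_range] at hm'
  constructor
  · intro h j hj
    rw [Finset.mem_Icc] at hj
    rw [← hW m' (by omega), ← hW j (by omega)]
    exact h j (Finset.mem_Icc.2 hj)
  · intro h j hj
    rw [Finset.mem_Icc] at hj
    rw [hW m' (by omega), hW j (by omega)]
    exact h j (Finset.mem_Icc.2 hj)

lemma DVs_prefix {u u' : ℕ → ℤ} (hag : ∀ t < m + n, u t = u' t) :
    heightOfZ (Vs u) (m + n) - sInf ((fun k => heightOfZ (Vs u) k) '' Set.Icc m (m + n))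
      = heightOfZ (Vs u') (m + n)
        - sInf ((fun k => heightOfZ (Vs u') k) '' Set.Icc m (m + n)) := by
  rw [heightVs_prefix hag le_rfl]
  congr 2
  apply Set.image_congr
  intro k hk
  rw [Set.mem_Icc] at hk
  exact heightVs_prefix hag hk.2

end Height2

end S15

/-- first bound of Proposition 3.14 of the paper. Let `μ` be a non-trivial
critical offspring distribution, and let `(V n)` be the associated left-continuous random
walk (the Lukasiewicz path of a Galton–Watson forest with offspring distribution `μ`),
i.e. the i.i.d. increments have the law of `k - 1` where `k` has law `μ`. Then for every
`b ∈ (1, ∞)`, `m ∈ ℕ`, `n ∈ ℕ*`,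
`E[ |H_{m+n} - min_{m ≤ k ≤ m+n} H_k|^b ] ≤ e ⬝ b ⬝ Γ(b) ⬝ Λ₀(1/n)⁻ᵇ`. -/
theorem stmt15 {Ω : Type*} [MeasurableSpace Ω] (P : Measure Ω) [IsProbabilityMeasure P]
    (μ : Measure ℕ) [IsProbabilityMeasure μ]
    (hnontriv : μ {0} + μ {1} < 1)
    (hcrit : ∑' k : ℕ, (k : ℝ≥0∞) * μ {k} = 1)
    (ξ : ℕ → Ω → ℤ) (hmeas : ∀ i, Measurable (ξ i))
    (hindep : iIndepFun ξ P)
    (hdist : ∀ i, Measure.map (ξ i) P = Measure.map (fun k : ℕ => (k : ℤ) - 1) μ)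
    (V : ℕ → Ω → ℤ) (hV : ∀ n ω, V n ω = ∑ k ∈ Finset.range n, ξ k ω)
    (b : ℝ) (hb : 1 < b) (m n : ℕ) (hn : 0 < n) :
    ∫ ω, |(heightOfZ (fun j => V j ω) (m + n) : ℝ) -
        ((sInf ((fun k => heightOfZ (fun j => V j ω) k) '' Set.Icc m (m + n)) : ℕ) : ℝ)| ^ b
      ∂P ≤
      Real.exp 1 * b * Real.Gamma b * Lambda0 P V (1 / (n : ℝ)) ^ (-b) := by
  classical
  open S15 in
  have hmeasmap : Measurable (fun k : ℕ => (k : ℤ) - 1) := measurable_of_countable _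
  haveI hPν : IsProbabilityMeasure (Measure.map (fun k : ℕ => (k : ℤ) - 1) μ) :=
    Measure.isProbabilityMeasure_map hmeasmap.aemeasurable
  have hdist' : ∀ i, Measure.map (ξ i) P = Measure.map (fun k : ℕ => (k : ℤ) - 1) μ := hdist
  -- μ{0} < 1 hence the increment law charges {z ≥ 0}
  have hμ0 : μ {0} < 1 := by
    by_contra hc
    push_neg at hc
    have h1 : μ {0} = 1 := le_antisymm prob_le_one hc
    have h2 : μ ({0}ᶜ : Set ℕ) = 0 := by
      rw [prob_compl_eq_one_sub (MeasurableSet.singleton 0), h1]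
      simp
    have h3 : ∀ k : ℕ, 1 ≤ k → μ {k} = 0 := by
      intro k hk
      refine le_antisymm (le_trans (measure_mono ?_) h2.le) (by simp)
      intro x hx
      simp only [Set.mem_singleton_iff] at hx
      simp only [Set.mem_compl_iff, Set.mem_singleton_iff]
      omega
    have hzero : ∑' k : ℕ, (k : ℝ≥0∞) * μ {k} = 0 := by
      rw [ENNReal.tsum_eq_zero]
      intro k
      rcases Nat.eq_zero_or_pos k with rfl | hk
      · simp
      · rw [h3 k hk, mul_zero]
    rw [hcrit] at hzero
    exact one_ne_zero hzero
  have hνpos : 0 < (Measure.map (fun k : ℕ => (k : ℤ) - 1) μ) {z : ℤ | 0 ≤ z} := by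
    rw [Measure.map_apply hmeasmap (measurableSet_int _)]
    have hpre : (fun k : ℕ => (k : ℤ) - 1) ⁻¹' {z : ℤ | 0 ≤ z} = ({0}ᶜ : Set ℕ) := by
      ext k
      simp only [Set.mem_preimage, Set.mem_setOf_eq, Set.mem_compl_iff, Set.mem_singleton_iff]
      omega
    rw [hpre, prob_compl_eq_one_sub (MeasurableSet.singleton 0)]
    exact tsub_pos_iff_lt.2 hμ0
  -- the rate λ = 1/n
  have hnpos : (0:ℝ) < (n:ℝ) := by exact_mod_cast hn
  have hlam_pos : 0 < 1 / (n:ℝ) := by positivity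
  -- φ and Λ
  have hladder : ∀ ω : Ω, ladderTime V ω = T (fun t => ξ t ω) 1 := by
    intro ω
    apply ladder_eq_T1 (fun t => ξ t ω) (fun j => V j ω)
    intro j
    rw [hV j ω]
    rfl
  have hΛeq : Lambda0 P V (1 / (n:ℝ))
      = - Real.log (∫ ω, Real.exp (-(1 / (n:ℝ)) * (T (fun t => ξ t ω) 1 : ℝ)) ∂P) := by
    unfold Lambda0
    congr 2
    apply integral_congr_ae (Filter.Eventually.of_forall fun ω => ?_)
    rw [hladder ω]
  have hφpos : 0 < ∫ ω, Real.exp (-(1 / (n:ℝ)) * (T (fun t => ξ t ω) 1 : ℝ)) ∂P :=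
    phi_pos hmeas _ hlam_pos.le
  have hφlt1 : (∫ ω, Real.exp (-(1 / (n:ℝ)) * (T (fun t => ξ t ω) 1 : ℝ)) ∂P) < 1 :=
    phi_lt_one hmeas hdist' _ hlam_pos hνpos
  have hΛpos : 0 < Lambda0 P V (1 / (n:ℝ)) := by
    rw [hΛeq]
    have := Real.log_neg hφpos hφlt1
    linarith
  have hexpΛ : Real.exp (-Lambda0 P V (1 / (n:ℝ)))
      = ∫ ω, Real.exp (-(1 / (n:ℝ)) * (T (fun t => ξ t ω) 1 : ℝ)) ∂P := by
    rw [hΛeq, neg_neg, Real.exp_log hφpos]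
  -- the discrepancy D
  set Dfun : Ω → ℕ := fun ω =>
    heightOfZ (Vs (fun t => ξ t ω)) (m + n)
      - sInf ((fun k => heightOfZ (Vs (fun t => ξ t ω)) k) '' Set.Icc m (m + n)) with hDfun
  have hVfun : ∀ ω : Ω, (fun j => V j ω) = Vs (fun t => ξ t ω) := by
    intro ω
    funext j
    rw [hV j ω]
    rfl
  have hinteg : ∀ ω, |(heightOfZ (fun j => V j ω) (m + n) : ℝ) -
      ((sInf ((fun k => heightOfZ (fun j => V j ω) k) '' Set.Icc m (m + n)) : ℕ) : ℝ)| ^ b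
      = ((Dfun ω : ℕ) : ℝ) ^ b := by
    intro ω
    rw [hVfun ω, hDfun]
    simp only
    rw [Nat.cast_sub (sInf_le_heightVs _ m n)]
    rw [abs_of_nonneg (by
      have h := sInf_le_heightVs (fun t => ξ t ω) m n
      have h2 : ((sInf ((fun k => heightOfZ (Vs fun t => ξ t ω) k) '' Set.Icc m (m + n)) : ℕ) : ℝ)
          ≤ (heightOfZ (Vs fun t => ξ t ω) (m + n) : ℝ) := by exact_mod_cast h
      linarith)]
  -- reversed family
  set frev : ℕ → ℕ := fun t => if t < n then m + n - 1 - t else m + n + t with hfrevdef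
  have hfrev_inj : Function.Injective frev := by
    intro a c hac
    simp only [hfrevdef] at hac
    split_ifs at hac <;> omega
  have hDN : ∀ ω, Dfun ω ≤ N (fun t => ξ (frev t) ω) n := by
    intro ω
    have h1 := D_le_N (fun t => ξ t ω) m n hn
    have hNN : N (xrev (fun t => ξ t ω) m n) n = N (fun t => ξ (frev t) ω) n := by
      apply N_prefix _ le_rfl
      intro t ht
      simp only [xrev, hfrevdef, if_pos ht]
    rw [hDfun]
    simp only
    omega
  have hDn : ∀ ω, Dfun ω ≤ n := fun ω => le_trans (hDN ω) (N_le_self _ n)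
  -- measurability of Dfun
  have hmeasD : Measurable Dfun := by
    have hΦ : Dfun = (fun y : Fin (m+n) → ℤ =>
        heightOfZ (Vs (S15.ext (m + n) y)) (m + n)
          - sInf ((fun k => heightOfZ (Vs (S15.ext (m + n) y)) k) '' Set.Icc m (m + n)))
        ∘ (fun ω (i : Fin (m + n)) => ξ (i : ℕ) ω) := by
      funext ω
      rw [hDfun]
      simp only [Function.comp_apply]
      exact DVs_prefix m n (ext_agree (m + n) (fun t => t) ω)
    rw [hΦ]
    exact (measurable_of_countable _).comp (meas_tuple hmeas (m + n) (fun i => (i : ℕ)))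
  have hmeasEventD : ∀ j : ℕ, MeasurableSet {ω | j ≤ Dfun ω} := fun j =>
    hmeasD measurableSet_Ici
  -- Chernoff bound for Dfun
  have hchern : ∀ j : ℕ, (P {ω | j ≤ Dfun ω}).toReal
      ≤ Real.exp 1 * (∫ ω, Real.exp (-(1 / (n:ℝ)) * (T (fun t => ξ t ω) 1 : ℝ)) ∂P) ^ j := by
    intro j
    have h1 : P {ω | j ≤ Dfun ω} ≤ P {ω | j ≤ N (fun t => ξ (frev t) ω) n} :=
      measure_mono (fun ω h => le_trans h (hDN ω))
    have h2 := chernoff hmeas hindep hdist' (1 / (n:ℝ)) hlam_pos.le frev hfrev_inj j n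
    have h3 : (1 / (n:ℝ)) * (n:ℝ) = 1 := by
      field_simp
    rw [h3] at h2
    exact le_trans (ENNReal.toReal_mono (measure_ne_top _ _) h1) h2
  -- layer cake
  have hpt : ∀ ω, ((Dfun ω : ℕ) : ℝ) ^ b
      = ∑ j ∈ Finset.Icc 1 n,
          (((j:ℝ)) ^ b - ((j:ℝ) - 1) ^ b) * (if j ≤ Dfun ω then (1:ℝ) else 0) := by
    intro ω
    have h1 : ∀ j : ℕ, (((j:ℝ)) ^ b - ((j:ℝ) - 1) ^ b) * (if j ≤ Dfun ω then (1:ℝ) else 0)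
        = if j ≤ Dfun ω then (((j:ℝ)) ^ b - ((j:ℝ) - 1) ^ b) else 0 := by
      intro j
      split <;> ring
    rw [Finset.sum_congr rfl (fun j _ => h1 j), ← Finset.sum_filter]
    have h2 : (Finset.Icc 1 n).filter (fun j => j ≤ Dfun ω) = Finset.Icc 1 (Dfun ω) := by
      ext j
      simp only [Finset.mem_filter, Finset.mem_Icc]
      have := hDn ω
      omega
    rw [h2]
    have h3 : ∑ j ∈ Finset.Icc 1 (Dfun ω), (((j:ℝ)) ^ b - ((j:ℝ) - 1) ^ b)
        = ∑ i ∈ Finset.range (Dfun ω), ((((i+1:ℕ)):ℝ) ^ b - (((i:ℕ)):ℝ) ^ b) := by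
      apply Finset.sum_nbij' (fun j => j - 1) (fun i => i + 1)
      · intro j hj; simp only [Finset.mem_Icc] at hj; simp only [Finset.mem_range]; omega
      · intro i hi; simp only [Finset.mem_range] at hi; simp only [Finset.mem_Icc]; omega
      · intro j hj; simp only [Finset.mem_Icc] at hj; omega
      · intro i _; omega
      · intro j hj
        simp only [Finset.mem_Icc] at hj
        have hj1 : ((j - 1 + 1 : ℕ) : ℝ) = (j : ℝ) := by
          have : j - 1 + 1 = j := by omega
          rw [this]
        have hj2 : ((j - 1 : ℕ) : ℝ) = (j : ℝ) - 1 := by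
          have h : (1:ℕ) ≤ j := hj.1
          push_cast [h]
          ring
        rw [hj1, hj2]
    rw [h3, Finset.sum_range_sub (fun i => ((i:ℕ):ℝ) ^ b) (Dfun ω)]
    rw [Nat.cast_zero, Real.zero_rpow (by linarith)]
    ring
  have hcj_nonneg : ∀ j : ℕ, 1 ≤ j → 0 ≤ ((j:ℝ)) ^ b - ((j:ℝ) - 1) ^ b := by
    intro j hj
    have hj1 : (1:ℝ) ≤ (j:ℝ) := by exact_mod_cast hj
    have := Real.rpow_le_rpow (by linarith : (0:ℝ) ≤ (j:ℝ) - 1) (by linarith : (j:ℝ) - 1 ≤ (j:ℝ))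
      (by linarith : (0:ℝ) ≤ b)
    linarith
  have hind_eq : ∀ j : ℕ, (fun ω => if j ≤ Dfun ω then (1:ℝ) else 0)
      = {ω | j ≤ Dfun ω}.indicator (fun _ => (1:ℝ)) := by
    intro j
    funext ω
    rw [Set.indicator_apply]
    congr 1
  calc ∫ ω, |(heightOfZ (fun j => V j ω) (m + n) : ℝ) -
        ((sInf ((fun k => heightOfZ (fun j => V j ω) k) '' Set.Icc m (m + n)) : ℕ) : ℝ)| ^ b ∂P
      = ∫ ω, ∑ j ∈ Finset.Icc 1 n,
          (((j:ℝ)) ^ b - ((j:ℝ) - 1) ^ b) * (if j ≤ Dfun ω then (1:ℝ) else 0) ∂P := by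
        apply integral_congr_ae (Filter.Eventually.of_forall fun ω => ?_)
        rw [hinteg ω, hpt ω]
    _ = ∑ j ∈ Finset.Icc 1 n,
          (((j:ℝ)) ^ b - ((j:ℝ) - 1) ^ b) * (P {ω | j ≤ Dfun ω}).toReal := by
        rw [integral_finset_sum]
        · apply Finset.sum_congr rfl
          intro j _
          rw [integral_const_mul, hind_eq j, integral_indicator_const (1:ℝ) (hmeasEventD j)]
          simp [Measure.real_def]
        · intro j _
          apply Integrable.const_mul
          rw [hind_eq j]
          exact (integrable_const 1).indicator (hmeasEventD j)
    _ ≤ ∑ j ∈ Finset.Icc 1 n,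
          (((j:ℝ)) ^ b - ((j:ℝ) - 1) ^ b) * (Real.exp 1
            * (∫ ω, Real.exp (-(1 / (n:ℝ)) * (T (fun t => ξ t ω) 1 : ℝ)) ∂P) ^ j) := by
        apply Finset.sum_le_sum
        intro j hj
        rw [Finset.mem_Icc] at hj
        exact mul_le_mul_of_nonneg_left (hchern j) (hcj_nonneg j hj.1)
    _ = Real.exp 1 * ∑ j ∈ Finset.Icc 1 n,
          (((j:ℝ)) ^ b - ((j:ℝ) - 1) ^ b) * Real.exp (-(Lambda0 P V (1 / (n:ℝ)) * j)) := by
        rw [Finset.mul_sum]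
        apply Finset.sum_congr rfl
        intro j _
        rw [← hexpΛ, ← Real.exp_nat_mul]
        rw [show (j:ℝ) * -Lambda0 P V (1 / (n:ℝ)) = -(Lambda0 P V (1 / (n:ℝ)) * j) by ring]
        ring
    _ ≤ Real.exp 1 * (b * Real.Gamma b * Lambda0 P V (1 / (n:ℝ)) ^ (-b)) := by
        apply mul_le_mul_of_nonneg_left (analytic_bound hb hΛpos n) (Real.exp_pos _).le
    _ = Real.exp 1 * b * Real.Gamma b * Lambda0 P V (1 / (n:ℝ)) ^ (-b) := by ring
end

section
/- Let m, n ∈ ℕ and let (V_j)_{0 ≤ j ≤ m+n} be any finite sequence of real numbers. Define H_l = #{j ∈ {0, ..., l−1} : V_j = min_{j ≤ i ≤ l} V_i} for 0 ≤ l ≤ m+n, and define the time-reversed sequence Ṽ_k = V_{m+n} − V_{m+n−k} for 0 ≤ k ≤ m+n. Then H_{m+n} − min_{m ≤ k ≤ m+n} H_k = #{k ∈ {1, ..., n} : Ṽ_k = max_{0 ≤ j ≤ k} Ṽ_j}. -/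
open scoped Classical

/-- The discrete height process of the path `V`:
`H l = #{ j ∈ {0, …, l-1} : V j = min_{j ≤ i ≤ l} V i }`. -/
noncomputable def heightOf (V : ℕ → ℝ) (l : ℕ) : ℕ :=
  ((Finset.range l).filter fun j => ∀ i ∈ Finset.Icc j l, V j ≤ V i).card

/-- path duality used in the proof of Proposition 3.14 of the paper.
For any `m, n` and any sequence `(V_j)_{0 ≤ j ≤ m+n}` of reals,
`H_{m+n} - min_{m ≤ k ≤ m+n} H_k` equals the number of weak ascending record times in
`{1, …, n}` of the time-reversed path `Ṽ_k = V_{m+n} - V_{m+n-k}`. -/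
theorem stmt17 (m n : ℕ) (V : ℕ → ℝ) :
    (heightOf V (m + n) : ℤ) -
        ((sInf (heightOf V '' Set.Icc m (m + n)) : ℕ) : ℤ) =
      (((Finset.Icc 1 n).filter fun k => ∀ j ∈ Finset.Iic k,
          V (m + n) - V (m + n - j) ≤ V (m + n) - V (m + n - k)).card : ℤ) := by
  classical
  set P : ℕ → Prop := fun j => ∀ i ∈ Finset.Icc j (m + n), V j ≤ V i with hP
  set B := (Finset.range m).filter P with hB
  set C := (Finset.Ico m (m + n)).filter P with hC
  -- split heightOf V (m+n)
  have hsplit : heightOf V (m + n) = B.card + C.card := by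
    have hu : Finset.range (m + n) = Finset.range m ∪ Finset.Ico m (m + n) := by
      simp only [Finset.range_eq_Ico]
      exact (Finset.Ico_union_Ico_eq_Ico (Nat.zero_le m) (Nat.le_add_right m n)).symm
    have hd : Disjoint B C := by
      apply Finset.disjoint_filter_filter
      simp [Finset.disjoint_left, Finset.mem_Ico, Finset.mem_range]
      omega
    rw [heightOf, hu, Finset.filter_union, Finset.card_union_of_disjoint hd]
  -- the right hand side is C.card
  have hRC : ((Finset.Icc 1 n).filter fun k => ∀ j ∈ Finset.Iic k,
      V (m + n) - V (m + n - j) ≤ V (m + n) - V (m + n - k)).card = C.card := by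
    apply Finset.card_nbij' (fun k => m + n - k) (fun j => m + n - j)
    · intro k hk
      simp only [Finset.mem_coe, Finset.mem_filter, Finset.mem_Icc] at hk
      obtain ⟨⟨hk1, hk2⟩, hk3⟩ := hk
      simp only [Finset.mem_coe, hC, Finset.mem_filter, Finset.mem_Ico, hP]
      refine ⟨⟨by omega, by omega⟩, fun i hi => ?_⟩
      simp only [Finset.mem_Icc] at hi
      have h1 : m + n - i ∈ Finset.Iic k := by simp [Finset.mem_Iic]; omega
      have h2 := hk3 _ h1
      have h3 : m + n - (m + n - i) = i := by omega
      rw [h3] at h2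
      linarith
    · intro j hj
      simp only [Finset.mem_coe, hC, Finset.mem_filter, Finset.mem_Ico, hP] at hj
      obtain ⟨⟨hj1, hj2⟩, hj3⟩ := hj
      simp only [Finset.mem_coe, Finset.mem_filter, Finset.mem_Icc]
      refine ⟨⟨by omega, by omega⟩, fun j' hj' => ?_⟩
      simp only [Finset.mem_Iic] at hj'
      have h3 : m + n - (m + n - j) = j := by omega
      rw [h3]
      have h4 : m + n - j' ∈ Finset.Icc j (m + n) := by simp [Finset.mem_Icc]; omega
      have := hj3 _ h4
      linarith
    · intro k hk
      simp only [Finset.mem_coe, Finset.mem_filter, Finset.mem_Icc] at hk ⊢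
      omega
    · intro j hj
      simp only [Finset.mem_coe, hC, Finset.mem_filter, Finset.mem_Ico] at hj ⊢
      omega
  -- the infimum is B.card
  have hBsub : ∀ k ∈ Set.Icc m (m + n), B.card ≤ heightOf V k := by
    intro k hk
    obtain ⟨hk1, hk2⟩ := hk
    rw [heightOf]
    apply Finset.card_le_card
    intro j hj
    simp only [hB, Finset.mem_filter, Finset.mem_range, hP] at hj ⊢
    obtain ⟨hj1, hj2⟩ := hj
    exact ⟨lt_of_lt_of_le hj1 hk1, fun i hi => hj2 i (by
      simp only [Finset.mem_Icc] at hi ⊢; omega)⟩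
  -- the set of minimizers of V on [m, m+n]
  set S := (Finset.Icc m (m + n)).filter
    (fun k => ∀ i ∈ Finset.Icc m (m + n), V k ≤ V i) with hS
  have hSne : S.Nonempty := by
    obtain ⟨k, hk1, hk2⟩ := Finset.exists_min_image (Finset.Icc m (m + n)) V
      ⟨m, by simp⟩
    exact ⟨k, Finset.mem_filter.mpr ⟨hk1, hk2⟩⟩
  set k₀ := S.min' hSne with hk₀
  have hk₀S : k₀ ∈ S := S.min'_mem hSne
  obtain ⟨hk₀mem, hk₀min⟩ := Finset.mem_filter.mp hk₀S
  rw [Finset.mem_Icc] at hk₀mem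
  have hAB : (Finset.range k₀).filter (fun j => ∀ i ∈ Finset.Icc j k₀, V j ≤ V i) = B := by
    ext j
    simp only [hB, Finset.mem_filter, Finset.mem_range, hP]
    constructor
    · rintro ⟨hj, h⟩
      have hjk : V j ≤ V k₀ := h k₀ (Finset.mem_Icc.mpr ⟨le_of_lt hj, le_refl _⟩)
      have hjm : j < m := by
        by_contra hc
        push_neg at hc
        have hkj : V k₀ ≤ V j := hk₀min j (Finset.mem_Icc.mpr ⟨hc, by omega⟩)
        have hjS : j ∈ S := Finset.mem_filter.mpr ⟨Finset.mem_Icc.mpr ⟨hc, by omega⟩,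
          fun i hi => le_trans hjk (hk₀min i hi)⟩
        have := S.min'_le j hjS
        omega
      refine ⟨hjm, fun i hi => ?_⟩
      simp only [Finset.mem_Icc] at hi
      rcases le_or_gt i k₀ with h1 | h1
      · exact h i (Finset.mem_Icc.mpr ⟨hi.1, h1⟩)
      · have h2 : V k₀ ≤ V i := hk₀min i (Finset.mem_Icc.mpr ⟨by omega, hi.2⟩)
        linarith
    · rintro ⟨hj, h⟩
      refine ⟨by omega, fun i hi => h i ?_⟩
      simp only [Finset.mem_Icc] at hi ⊢
      omega
  have hHk₀ : heightOf V k₀ = B.card := by rw [heightOf, hAB]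
  have hInf : sInf (heightOf V '' Set.Icc m (m + n)) = B.card := by
    apply le_antisymm
    · have : heightOf V k₀ ∈ heightOf V '' Set.Icc m (m + n) :=
        ⟨k₀, Set.mem_Icc.mpr hk₀mem, rfl⟩
      calc sInf (heightOf V '' Set.Icc m (m + n)) ≤ heightOf V k₀ := Nat.sInf_le this
        _ = B.card := hHk₀
    · have hmem : heightOf V k₀ ∈ heightOf V '' Set.Icc m (m + n) :=
        ⟨k₀, Set.mem_Icc.mpr hk₀mem, rfl⟩
      apply le_csInf ⟨_, hmem⟩
      rintro x ⟨k, hk, rfl⟩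
      exact hBsub k hk
  rw [hsplit, hInf, hRC]
  push_cast
  ring
end

section
/- Let m ∈ ℕ*, n ∈ ℕ and let (V_j)_{0 ≤ j ≤ m+n} be any finite sequence of real numbers. Define H_l = #{j ∈ {0, ..., l−1} : V_j = min_{j ≤ i ≤ l} V_i} for 0 ≤ l ≤ m+n, define V̂_k = V_m − V_{m−k} for 0 ≤ k ≤ m, and set I'_n = min_{0 ≤ k ≤ n} (V_{m+k} − V_m). Then H_m − min_{m ≤ k ≤ m+n} H_k = #{k ∈ {1, ..., m} : V̂_k = max_{0 ≤ j ≤ k} V̂_j and V̂_k < −I'_n}. -/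
open scoped Classical

/-- second path duality used in the proof of Proposition 3.14 of the
paper. For `m ≥ 1`, `n ∈ ℕ` and any sequence `(V_j)_{0 ≤ j ≤ m+n}` of reals,
`H_m - min_{m ≤ k ≤ m+n} H_k` equals the number of `k ∈ {1, …, m}` that are weak ascending
record times of the path `V̂_k = V_m - V_{m-k}` reversed at time `m` and satisfy
`V̂_k < -I'_n`, where `I'_n = min_{0 ≤ i ≤ n} (V_{m+i} - V_m)`. -/
theorem stmt18 (m n : ℕ) (hm : 0 < m) (V : ℕ → ℝ) :
    (heightOf V m : ℤ) -
        ((sInf (heightOf V '' Set.Icc m (m + n)) : ℕ) : ℤ) =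
      (((Finset.Icc 1 m).filter fun k =>
          (∀ j ∈ Finset.Iic k, V m - V (m - j) ≤ V m - V (m - k)) ∧
            V m - V (m - k) < -sInf ((fun i => V (m + i) - V m) '' Set.Icc 0 n)).card : ℤ) := by
  classical
  set D : Finset ℕ :=
    (Finset.range m).filter (fun j => ∀ i ∈ Finset.Icc j m, V j ≤ V i) with hD
  set B : Finset ℕ :=
    (Finset.range m).filter (fun j => ∀ i ∈ Finset.Icc j (m + n), V j ≤ V i) with hB
  have hBD : B ⊆ D := by
    intro j hj
    rw [hB, Finset.mem_filter, Finset.mem_range] at hj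
    rw [hD, Finset.mem_filter, Finset.mem_range]
    refine ⟨hj.1, fun i hi => hj.2 i ?_⟩
    rw [Finset.mem_Icc] at hi ⊢
    omega
  -- choose the first argmin k₀ of V on [m, m+n]
  obtain ⟨k₀, hk₀mem, hk₀min, hk₀first⟩ :
      ∃ k₀ ∈ Finset.Icc m (m + n), (∀ i ∈ Finset.Icc m (m + n), V k₀ ≤ V i) ∧
        ∀ j ∈ Finset.Icc m (m + n), j < k₀ →
          ¬ (∀ i ∈ Finset.Icc m (m + n), V j ≤ V i) := by
    set S := (Finset.Icc m (m + n)).filter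
      (fun k => ∀ i ∈ Finset.Icc m (m + n), V k ≤ V i) with hS
    have hSne : S.Nonempty := by
      obtain ⟨k, hk, hkmin⟩ := Finset.exists_min_image (Finset.Icc m (m + n)) V
        ⟨m, by simp⟩
      exact ⟨k, Finset.mem_filter.2 ⟨hk, hkmin⟩⟩
    refine ⟨S.min' hSne, (Finset.mem_filter.1 (S.min'_mem hSne)).1,
      (Finset.mem_filter.1 (S.min'_mem hSne)).2, ?_⟩
    intro j hj hjlt hjall
    exact absurd (S.min'_le j (Finset.mem_filter.2 ⟨hj, hjall⟩)) (not_le.2 hjlt)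
  obtain ⟨hmk₀, hk₀mn⟩ := Finset.mem_Icc.1 hk₀mem
  -- heightOf V k₀ = B.card
  have hHk₀ : heightOf V k₀ = B.card := by
    unfold heightOf
    rw [hB]
    congr 1
    ext j
    simp only [Finset.mem_filter, Finset.mem_range]
    constructor
    · rintro ⟨hjk, hall⟩
      have hjk₀ : V j ≤ V k₀ := hall k₀ (Finset.mem_Icc.2 ⟨Nat.le_of_lt hjk, le_rfl⟩)
      have hjm : j < m := by
        by_contra h
        push_neg at h
        refine hk₀first j (Finset.mem_Icc.2 ⟨h, by omega⟩) hjk ?_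
        intro i hi
        exact le_trans hjk₀ (hk₀min i hi)
      refine ⟨hjm, fun i hi => ?_⟩
      rw [Finset.mem_Icc] at hi
      rcases le_or_gt i k₀ with h | h
      · exact hall i (Finset.mem_Icc.2 ⟨hi.1, h⟩)
      · exact le_trans hjk₀ (hk₀min i (Finset.mem_Icc.2 ⟨by omega, hi.2⟩))
    · rintro ⟨hjm, hall⟩
      refine ⟨by omega, fun i hi => hall i ?_⟩
      rw [Finset.mem_Icc] at hi ⊢
      omega
  -- the infimum of heightOf over [m, m+n] is B.card
  have hmemI : B.card ∈ heightOf V '' Set.Icc m (m + n) :=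
    ⟨k₀, Set.mem_Icc.2 ⟨hmk₀, hk₀mn⟩, hHk₀⟩
  have hlb : ∀ b ∈ heightOf V '' Set.Icc m (m + n), B.card ≤ b := by
    rintro b ⟨k, hk, rfl⟩
    obtain ⟨hmk, hkmn⟩ := Set.mem_Icc.1 hk
    unfold heightOf
    rw [hB]
    apply Finset.card_le_card
    intro j hj
    simp only [Finset.mem_filter, Finset.mem_range] at hj ⊢
    refine ⟨by omega, fun i hi => hj.2 i ?_⟩
    rw [Finset.mem_Icc] at hi ⊢
    omega
  have hsInf : sInf (heightOf V '' Set.Icc m (m + n)) = B.card :=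
    le_antisymm (csInf_le (OrderBot.bddBelow _) hmemI) (le_csInf ⟨_, hmemI⟩ hlb)
  have hHm : heightOf V m = D.card := by rw [hD]; rfl
  rw [hsInf, hHm]
  have hcast : (D.card : ℤ) - (B.card : ℤ) = ((D \ B).card : ℤ) := by
    rw [Finset.card_sdiff_of_subset hBD]
    exact_mod_cast (Nat.cast_sub (Finset.card_le_card hBD)).symm
  rw [hcast]
  -- facts about the real infimum
  set I : ℝ := sInf ((fun i => V (m + i) - V m) '' Set.Icc 0 n) with hI
  have hIfin : ((fun i => V (m + i) - V m) '' Set.Icc 0 n).Finite :=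
    (Set.finite_Icc 0 n).image _
  have hIne : ((fun i => V (m + i) - V m) '' Set.Icc 0 n).Nonempty :=
    ⟨_, ⟨0, Set.mem_Icc.2 ⟨le_rfl, Nat.zero_le n⟩, rfl⟩⟩
  have hIlt : ∀ c : ℝ, I < c ↔ ∃ i ≤ n, V (m + i) - V m < c := by
    intro c
    rw [hI, csInf_lt_iff hIfin.bddBelow hIne]
    constructor
    · rintro ⟨b, ⟨i, hi, rfl⟩, hb⟩
      exact ⟨i, (Set.mem_Icc.1 hi).2, hb⟩
    · rintro ⟨i, hi, h⟩
      exact ⟨_, ⟨i, Set.mem_Icc.2 ⟨Nat.zero_le _, hi⟩, rfl⟩, h⟩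
  -- bijection between the two sets
  norm_cast
  symm
  apply Finset.card_nbij' (fun k => m - k) (fun s => m - s)
  · -- forward membership
    intro k hk
    simp only [Finset.mem_coe, Finset.mem_filter, Finset.mem_Icc] at hk
    obtain ⟨⟨hk1, hkm⟩, hrec, hlt⟩ := hk
    simp only [Finset.mem_coe, Finset.mem_sdiff, hD, hB, Finset.mem_filter, Finset.mem_range]
    have hDmem : ∀ i ∈ Finset.Icc (m - k) m, V (m - k) ≤ V i := by
      intro i hi
      rw [Finset.mem_Icc] at hi
      have hj : m - i ∈ Finset.Iic k := Finset.mem_Iic.2 (by omega)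
      have h2 := hrec (m - i) hj
      have hmi : m - (m - i) = i := by omega
      rw [hmi] at h2
      linarith
    refine ⟨⟨by omega, hDmem⟩, ?_⟩
    rintro ⟨-, hall⟩
    have hI' : I < V (m - k) - V m := by linarith
    obtain ⟨i, hin, hi⟩ := (hIlt _).1 hI'
    have : V (m - k) ≤ V (m + i) := hall (m + i) (Finset.mem_Icc.2 ⟨by omega, by omega⟩)
    linarith
  · -- backward membership
    intro s hs
    simp only [Finset.mem_coe, Finset.mem_sdiff, hD, hB, Finset.mem_filter, Finset.mem_range] at hs
    obtain ⟨⟨hsm, hall⟩, hnot⟩ := hs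
    push_neg at hnot
    obtain ⟨i₀, hi₀mem, hi₀⟩ := hnot hsm
    rw [Finset.mem_Icc] at hi₀mem
    have hmi₀ : m < i₀ := by
      by_contra h
      push_neg at h
      exact absurd (hall i₀ (Finset.mem_Icc.2 ⟨hi₀mem.1, h⟩)) (not_le.2 hi₀)
    simp only [Finset.mem_coe, Finset.mem_filter, Finset.mem_Icc]
    have hms : m - (m - s) = s := by omega
    refine ⟨⟨by omega, by omega⟩, ?_, ?_⟩
    · intro j hj
      rw [Finset.mem_Iic] at hj
      rw [hms]
      have h2 : V s ≤ V (m - j) := hall (m - j) (Finset.mem_Icc.2 ⟨by omega, by omega⟩)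
      linarith
    · rw [hms]
      have hI' : I < V s - V m := by
        rw [hIlt]
        refine ⟨i₀ - m, by omega, ?_⟩
        have h3 : m + (i₀ - m) = i₀ := by omega
        rw [h3]
        linarith
      linarith
  · intro k hk
    simp only [Finset.mem_coe, Finset.mem_filter, Finset.mem_Icc] at hk
    beta_reduce
    omega
  · intro s hs
    simp only [Finset.mem_coe, Finset.mem_sdiff, hD, Finset.mem_filter, Finset.mem_range] at hs
    beta_reduce
    omega
end
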